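/- arXiv:math/9810122 — 8 statements merged into one kernel-verified Lean document; each statement's English description precedes it below -/
import Mathlib

section
/- Let C be a nonempty open cone in ℝⁿ (an open set closed under multiplication by positive reals) of full dimension n. If a polynomial p : ℝⁿ → ℝ vanishes on all integer lattice points contained in C, then p is identically zero. -/
open MvPolynomial

/-- A multivariate polynomial vanishing on a grid with more points per
coordinate than its total degree is zero. -/
lemma grid_vanish : ∀ (n : ℕ) (p : MvPolynomial (Fin n) ℝ) (S : Fin n → Finset ℝ),
    (∀ i, p.totalDegree < (S i).card) →
    (∀ x : Fin n → ℝ, (∀ i, x i ∈ S i) → MvPolynomial.eval x p = 0) → p = 0 := by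
  intro n
  induction n with
  | zero =>
    intro p S _ hz
    have h0 : MvPolynomial.eval (fun i : Fin 0 => i.elim0) p = 0 :=
      hz _ (fun i => i.elim0)
    rw [eq_C_of_isEmpty p] at h0 ⊢
    rw [eval_C] at h0
    rw [h0, map_zero]
  | succ m ih =>
    intro p S hcard hz
    have hq : finSuccEquiv ℝ m p = 0 := by
      apply Polynomial.ext
      intro j
      rw [Polynomial.coeff_zero]
      apply ih _ (fun i => S i.succ)
      · intro i
        by_cases h : (finSuccEquiv ℝ m p).coeff j = 0
        · rw [h]; simp only [totalDegree_zero]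
          exact lt_of_le_of_lt (Nat.zero_le _) (hcard i.succ)
        · exact lt_of_le_of_lt
            (le_trans (Nat.le_add_right _ j) (totalDegree_coeff_finSuccEquiv_add_le p j h))
            (hcard i.succ)
      · intro x' hx'
        have hr : Polynomial.map (MvPolynomial.eval x') (finSuccEquiv ℝ m p) = 0 := by
          apply Polynomial.eq_zero_of_natDegree_lt_card_of_eval_eq_zero' _ (S 0)
          · intro y hy
            rw [← eval_eq_eval_mv_eval']
            apply hz
            intro i
            refine Fin.cases ?_ ?_ i
            · simpa using hy
            · intro k; simpa using hx' k
          · calc (Polynomial.map (MvPolynomial.eval x') (finSuccEquiv ℝ m p)).natDegree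
                ≤ (finSuccEquiv ℝ m p).natDegree := Polynomial.natDegree_map_le
              _ = p.degreeOf 0 := natDegree_finSuccEquiv p
              _ ≤ p.totalDegree := degreeOf_le_totalDegree p 0
              _ < (S 0).card := hcard 0
        have := congrArg (fun q => Polynomial.coeff q j) hr
        simpa [Polynomial.coeff_map] using this
    have := congrArg (finSuccEquiv ℝ m).symm hq
    simpa using this

theorem stmt_0 (n : ℕ) (C : Set (Fin n → ℝ)) (hC_open : IsOpen C)
    (hC_ne : C.Nonempty)
    (hC_cone : ∀ x ∈ C, ∀ t : ℝ, 0 < t → t • x ∈ C)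
    (p : MvPolynomial (Fin n) ℝ)
    (hvan : ∀ x ∈ C, (∀ i, ∃ m : ℤ, x i = (m : ℝ)) →
      MvPolynomial.eval x p = 0) :
    p = 0 := by
  obtain ⟨c, hc⟩ := hC_ne
  obtain ⟨ε, hε, hball⟩ := Metric.isOpen_iff.mp hC_open c hc
  set D : ℕ := p.totalDegree with hD
  set k : ℕ := D + 1 with hk
  set t : ℝ := ((k : ℝ) + 2) / ε with ht
  have htpos : 0 < t := div_pos (by positivity) hε
  have htne : t ≠ 0 := ne_of_gt htpos
  set a : Fin n → ℤ := fun i => ⌊t * c i⌋ with ha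
  set S : Fin n → Finset ℝ :=
    fun i => Finset.image (fun j : Fin k => ((a i + (j : ℕ) : ℤ) : ℝ)) Finset.univ with hS
  have hinj : ∀ i, Function.Injective (fun j : Fin k => ((a i + (j : ℕ) : ℤ) : ℝ)) := by
    intro i j₁ j₂ h
    simp only at h
    have : (a i + (j₁ : ℕ) : ℤ) = (a i + (j₂ : ℕ) : ℤ) := by exact_mod_cast h
    have : ((j₁ : ℕ) : ℤ) = ((j₂ : ℕ) : ℤ) := by omega
    exact Fin.ext (by exact_mod_cast this)
  have hcard : ∀ i, p.totalDegree < (S i).card := by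
    intro i
    rw [hS]
    rw [Finset.card_image_of_injective _ (hinj i), Finset.card_univ, Fintype.card_fin]
    omega
  -- points of the grid are integer points of C
  have hgrid : ∀ x : Fin n → ℝ, (∀ i, x i ∈ S i) → MvPolynomial.eval x p = 0 := by
    intro x hx
    have hxint : ∀ i, ∃ m : ℤ, x i = (m : ℝ) := by
      intro i
      obtain ⟨j, _, hj⟩ := Finset.mem_image.mp (hx i)
      exact ⟨a i + (j : ℕ), hj.symm⟩
    have hxbound : ∀ i, |x i - t * c i| < (k : ℝ) + 2 := by
      intro i
      obtain ⟨j, _, hj⟩ := Finset.mem_image.mp (hx i)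
      have hfl₁ : (a i : ℝ) ≤ t * c i := Int.floor_le _
      have hfl₂ : t * c i - 1 < (a i : ℝ) := Int.sub_one_lt_floor _
      have hjk : ((j : ℕ) : ℝ) ≤ (k : ℝ) - 1 := by
        have := j.isLt
        have h1 : ((j : ℕ) : ℝ) ≤ (k : ℝ) - 1 := by
          have : (j : ℕ) + 1 ≤ k := j.isLt
          have := (Nat.cast_le (α := ℝ)).mpr this
          push_cast at this ⊢
          linarith
        exact h1
      rw [abs_lt]
      constructor
      · have : (a i : ℝ) + (j : ℕ) = x i := by
          rw [← hj]; push_cast; ring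
        nlinarith [Nat.cast_nonneg (α := ℝ) (j : ℕ)]
      · have : (a i : ℝ) + (j : ℕ) = x i := by
          rw [← hj]; push_cast; ring
        nlinarith
    have hxC : x ∈ C := by
      have hmem : t⁻¹ • x ∈ Metric.ball c ε := by
        rw [Metric.mem_ball]
        rw [dist_pi_lt_iff hε]
        intro i
        have : dist ((t⁻¹ • x) i) (c i) = t⁻¹ * |x i - t * c i| := by
          simp only [Pi.smul_apply, smul_eq_mul, Real.dist_eq]
          have heq : t⁻¹ * x i - c i = t⁻¹ * (x i - t * c i) := by
            field_simp
          rw [heq, abs_mul, abs_of_pos (inv_pos.mpr htpos)]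
        rw [this]
        have h2 : t⁻¹ * |x i - t * c i| < t⁻¹ * ((k : ℝ) + 2) :=
          mul_lt_mul_of_pos_left (hxbound i) (inv_pos.mpr htpos)
        have h3 : t⁻¹ * ((k : ℝ) + 2) = ε := by
          rw [ht]; field_simp
        linarith
      have := hC_cone _ (hball hmem) t htpos
      rwa [smul_inv_smul₀ htne] at this
    exact hvan x hxC hxint
  exact grid_vanish n p S hcard hgrid
end

section
/- Let C be a nonempty open cone in ℝⁿ. If two polynomials p, q : ℝⁿ → ℝ agree on all integer lattice points in C, then p = q. -/
open MvPolynomial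

noncomputable def linePoly {n : ℕ} (a b : Fin n → ℝ) (r : MvPolynomial (Fin n) ℝ) :
    Polynomial ℝ :=
  MvPolynomial.eval₂ Polynomial.C
    (fun i => Polynomial.C (a i) + Polynomial.C (b i) * Polynomial.X) r

lemma linePoly_eval {n : ℕ} (a b : Fin n → ℝ) (r : MvPolynomial (Fin n) ℝ) (t : ℝ) :
    Polynomial.eval t (linePoly a b r)
      = MvPolynomial.eval (fun i => a i + b i * t) r := by
  have h := MvPolynomial.eval₂_comp_left (Polynomial.evalRingHom t) Polynomial.C
    (fun i => Polynomial.C (a i) + Polynomial.C (b i) * Polynomial.X) r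
  simp only [Polynomial.coe_evalRingHom] at h
  rw [linePoly, h]
  congr 1
  · ext x; simp
  · funext i; simp

lemma zero_of_open {n : ℕ} (U : Set (Fin n → ℝ)) (hU : IsOpen U) (hne : U.Nonempty)
    (r : MvPolynomial (Fin n) ℝ) (h : ∀ x ∈ U, MvPolynomial.eval x r = 0) : r = 0 := by
  obtain ⟨a, ha⟩ := hne
  apply MvPolynomial.funext
  intro y
  set b : Fin n → ℝ := fun i => y i - a i with hb
  have key : linePoly a b r = 0 := by
    apply Polynomial.eq_zero_of_infinite_isRoot
    have hcont : Continuous fun t : ℝ => (fun i => a i + b i * t) := by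
      apply continuous_pi; intro i; continuity
    have hopen : IsOpen {t : ℝ | (fun i => a i + b i * t) ∈ U} := hU.preimage hcont
    have h0 : (0 : ℝ) ∈ {t : ℝ | (fun i => a i + b i * t) ∈ U} := by
      simpa using ha
    obtain ⟨δ, hδ, hball⟩ := Metric.isOpen_iff.1 hopen 0 h0
    have hinf : (Set.Ioo (-δ) δ).Infinite := Set.Ioo_infinite (by linarith : -δ < δ)
    refine hinf.mono ?_
    intro t ht
    have : t ∈ Metric.ball (0 : ℝ) δ := by
      simp only [Metric.mem_ball, Real.dist_eq, sub_zero]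
      rw [abs_lt]; exact ⟨ht.1, ht.2⟩
    have := hball this
    simp only [Polynomial.IsRoot, Set.mem_setOf_eq]
    rw [linePoly_eval]
    exact h _ this
  have := linePoly_eval a b r 1
  rw [key] at this
  simp only [Polynomial.eval_zero] at this
  have hy : (fun i => a i + b i * 1) = y := by funext i; simp [hb]
  rw [hy] at this
  simp [← this]

theorem stmt_1 (n : ℕ) (C : Set (Fin n → ℝ)) (hC_open : IsOpen C)
    (hC_ne : C.Nonempty)
    (hC_cone : ∀ x ∈ C, ∀ t : ℝ, 0 < t → t • x ∈ C)
    (p q : MvPolynomial (Fin n) ℝ)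
    (hagree : ∀ x ∈ C, (∀ i, ∃ m : ℤ, x i = (m : ℝ)) →
      MvPolynomial.eval x p = MvPolynomial.eval x q) :
    p = q := by
  set r : MvPolynomial (Fin n) ℝ := p - q with hr
  have hr0 : ∀ x ∈ C, (∀ i, ∃ m : ℤ, x i = (m : ℝ)) → MvPolynomial.eval x r = 0 := by
    intro x hx hint
    simp [hr, sub_eq_zero, hagree x hx hint]
  -- Step 1: r vanishes on rational points of C
  have hrat : ∀ x ∈ C, (∀ i, ∃ a : ℚ, x i = (a : ℝ)) → MvPolynomial.eval x r = 0 := by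
    intro x hx hq
    choose c hc using hq
    set d : ℕ := ∏ i, (c i).den with hd
    have hdpos : 0 < d := Finset.prod_pos (fun i _ => (c i).pos)
    have key : linePoly 0 x r = 0 := by
      apply Polynomial.eq_zero_of_infinite_isRoot
      apply Set.infinite_of_injective_forall_mem
        (f := fun k : ℕ => (((k + 1) * d : ℕ) : ℝ))
      · intro k₁ k₂ hkk
        have h' : (((k₁ + 1) * d : ℕ) : ℝ) = (((k₂ + 1) * d : ℕ) : ℝ) := hkk
        have : (k₁ + 1) * d = (k₂ + 1) * d := Nat.cast_injective h'
        exact Nat.succ_injective (Nat.eq_of_mul_eq_mul_right hdpos this)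
      · intro k
        set t : ℝ := (((k + 1) * d : ℕ) : ℝ) with htdef
        have htpos : (0 : ℝ) < t := by
          rw [htdef]
          have : 0 < (k + 1) * d := Nat.mul_pos (Nat.succ_pos k) hdpos
          exact_mod_cast this
        simp only [Polynomial.IsRoot, Set.mem_setOf_eq]
        rw [linePoly_eval]
        have hmem : (fun i => (0 : ℝ) + x i * t) ∈ C := by
          have := hC_cone x hx t htpos
          convert this using 1
          funext i; simp [mul_comm]
        apply hr0 _ hmem
        intro i
        set M : ℤ := (((k + 1) * d : ℕ) : ℤ) with hM
        refine ⟨M * (c i).num / (c i).den, ?_⟩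
        have hdvd : ((c i).den : ℤ) ∣ M := by
          rw [hM]
          exact_mod_cast Dvd.dvd.mul_left
            (Finset.dvd_prod_of_mem (fun i => (c i).den) (Finset.mem_univ i)) (k + 1)
        have hdvd2 : ((c i).den : ℤ) ∣ M * (c i).num := Dvd.dvd.mul_right hdvd _
        rw [Int.cast_div_charZero hdvd2]
        have hMt : (M : ℝ) = t := by rw [hM, htdef]; push_cast; ring
        push_cast
        rw [hc i, hMt, Rat.cast_def]
        have hden : ((c i).den : ℝ) ≠ 0 := by exact_mod_cast (c i).den_nz
        field_simp
        ring
    have := linePoly_eval 0 x r 1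
    rw [key] at this
    simp only [Polynomial.eval_zero] at this
    have hx1 : (fun i => (0 : Fin n → ℝ) i + x i * 1) = x := by funext i; simp
    rw [hx1] at this
    exact this.symm
  -- Step 2: by continuity, r vanishes on C
  have hC0 : ∀ x ∈ C, MvPolynomial.eval x r = 0 := by
    intro x hx
    have hclosed : IsClosed {y : Fin n → ℝ | MvPolynomial.eval y r = 0} :=
      isClosed_eq (MvPolynomial.continuous_eval r) continuous_const
    have hdense : x ∈ closure {y : Fin n → ℝ | MvPolynomial.eval y r = 0} := by
      rw [mem_closure_iff_nhds]
      intro U hU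
      have : U ∩ C ∈ nhds x := Filter.inter_mem hU (hC_open.mem_nhds hx)
      obtain ⟨ε, hε, hball⟩ := Metric.mem_nhds_iff.1 this
      -- find a rational point in the ball
      have : ∃ y : Fin n → ℝ, (∀ i, ∃ a : ℚ, y i = (a : ℝ)) ∧ y ∈ Metric.ball x ε := by
        have : ∀ i, ∃ a : ℚ, |x i - (a : ℝ)| < ε / 2 := by
          intro i
          obtain ⟨a, ha1, ha2⟩ := exists_rat_btwn (show x i - ε/2 < x i + ε/2 by linarith)
          exact ⟨a, abs_lt.2 ⟨by linarith, by linarith⟩⟩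
        choose a haa using this
        refine ⟨fun i => (a i : ℝ), fun i => ⟨a i, rfl⟩, ?_⟩
        rw [Metric.mem_ball, dist_pi_lt_iff hε]
        intro i
        rw [Real.dist_eq]
        calc |(a i : ℝ) - x i| = |x i - (a i : ℝ)| := abs_sub_comm _ _
          _ < ε / 2 := haa i
          _ < ε := by linarith
      obtain ⟨y, hyq, hyb⟩ := this
      have hyUC := hball hyb
      exact ⟨y, hyUC.1, hrat y hyUC.2 hyq⟩
    have := hclosed.closure_eq ▸ hdense
    exact this
  -- Step 3: r = 0
  have : r = 0 := zero_of_open C hC_open hC_ne r hC0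
  have := sub_eq_zero.1 (hr ▸ this)
  exact this
end

section
/- If a₁,...,a₅ are positive integers forming a nearly regular tuple (each pairwise sum strictly less than the sum of the other three), then ½(Σaᵢ)² − 2(Σaᵢ²) + ½(Σaᵢ) + 1 is a positive integer. -/
def NearlyRegular (a₁ a₂ a₃ a₄ a₅ : ℝ) : Prop :=
  0 < a₁ ∧ 0 < a₂ ∧ 0 < a₃ ∧ 0 < a₄ ∧ 0 < a₅ ∧
  a₁ + a₂ < a₃ + a₄ + a₅ ∧ a₁ + a₃ < a₂ + a₄ + a₅ ∧ a₁ + a₄ < a₂ + a₃ + a₅ ∧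
  a₁ + a₅ < a₂ + a₃ + a₄ ∧ a₂ + a₃ < a₁ + a₄ + a₅ ∧ a₂ + a₄ < a₁ + a₃ + a₅ ∧
  a₂ + a₅ < a₁ + a₃ + a₄ ∧ a₃ + a₄ < a₁ + a₂ + a₅ ∧ a₃ + a₅ < a₁ + a₂ + a₄ ∧
  a₄ + a₅ < a₁ + a₂ + a₃

theorem stmt_9 (a₁ a₂ a₃ a₄ a₅ : ℤ)
    (h : NearlyRegular (a₁ : ℝ) a₂ a₃ a₄ a₅) :
    ∃ k : ℤ, 0 < k ∧
      ((1:ℝ)/2) * ((a₁:ℝ) + a₂ + a₃ + a₄ + a₅)^2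
        - 2 * ((a₁:ℝ)^2 + a₂^2 + a₃^2 + a₄^2 + a₅^2)
        + (1/2) * ((a₁:ℝ) + a₂ + a₃ + a₄ + a₅) + 1 = (k : ℝ) := by
  obtain ⟨p1, p2, p3, p4, p5, h12, h13, h14, h15, h23, h24, h25, h34, h35, h45⟩ := h
  have q1 : 0 < a₁ := by exact_mod_cast p1
  have q2 : 0 < a₂ := by exact_mod_cast p2
  have q3 : 0 < a₃ := by exact_mod_cast p3
  have q4 : 0 < a₄ := by exact_mod_cast p4
  have q5 : 0 < a₅ := by exact_mod_cast p5
  have g12 : (0:ℤ) ≤ a₃ + a₄ + a₅ - a₁ - a₂ - 1 := by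
    have : a₁ + a₂ + 1 ≤ a₃ + a₄ + a₅ := by exact_mod_cast h12
    linarith
  have g13 : (0:ℤ) ≤ a₂ + a₄ + a₅ - a₁ - a₃ - 1 := by
    have : a₁ + a₃ + 1 ≤ a₂ + a₄ + a₅ := by exact_mod_cast h13
    linarith
  have g14 : (0:ℤ) ≤ a₂ + a₃ + a₅ - a₁ - a₄ - 1 := by
    have : a₁ + a₄ + 1 ≤ a₂ + a₃ + a₅ := by exact_mod_cast h14
    linarith
  have g15 : (0:ℤ) ≤ a₂ + a₃ + a₄ - a₁ - a₅ - 1 := by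
    have : a₁ + a₅ + 1 ≤ a₂ + a₃ + a₄ := by exact_mod_cast h15
    linarith
  have g23 : (0:ℤ) ≤ a₁ + a₄ + a₅ - a₂ - a₃ - 1 := by
    have : a₂ + a₃ + 1 ≤ a₁ + a₄ + a₅ := by exact_mod_cast h23
    linarith
  have g24 : (0:ℤ) ≤ a₁ + a₃ + a₅ - a₂ - a₄ - 1 := by
    have : a₂ + a₄ + 1 ≤ a₁ + a₃ + a₅ := by exact_mod_cast h24
    linarith
  have g25 : (0:ℤ) ≤ a₁ + a₃ + a₄ - a₂ - a₅ - 1 := by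
    have : a₂ + a₅ + 1 ≤ a₁ + a₃ + a₄ := by exact_mod_cast h25
    linarith
  have g34 : (0:ℤ) ≤ a₁ + a₂ + a₅ - a₃ - a₄ - 1 := by
    have : a₃ + a₄ + 1 ≤ a₁ + a₂ + a₅ := by exact_mod_cast h34
    linarith
  have g35 : (0:ℤ) ≤ a₁ + a₂ + a₄ - a₃ - a₅ - 1 := by
    have : a₃ + a₅ + 1 ≤ a₁ + a₂ + a₄ := by exact_mod_cast h35
    linarith
  have g45 : (0:ℤ) ≤ a₁ + a₂ + a₃ - a₄ - a₅ - 1 := by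
    have : a₄ + a₅ + 1 ≤ a₁ + a₂ + a₃ := by exact_mod_cast h45
    linarith
  set S : ℤ := a₁ + a₂ + a₃ + a₄ + a₅ with hS
  -- key inequality: 4Q ≤ S² - 2S + 5
  have hT : (0:ℤ) ≤ (a₃ + a₄ + a₅ - a₁ - a₂ - 1) * (a₁ + a₂ + a₅ - a₃ - a₄ - 1)
      + (a₂ + a₄ + a₅ - a₁ - a₃ - 1) * (a₁ + a₃ + a₅ - a₂ - a₄ - 1)
      + (a₂ + a₃ + a₅ - a₁ - a₄ - 1) * (a₁ + a₄ + a₅ - a₂ - a₃ - 1)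
      + (a₃ + a₄ + a₅ - a₁ - a₂ - 1) * (a₁ + a₂ + a₄ - a₃ - a₅ - 1)
      + (a₂ + a₄ + a₅ - a₁ - a₃ - 1) * (a₁ + a₃ + a₄ - a₂ - a₅ - 1)
      + (a₂ + a₃ + a₄ - a₁ - a₅ - 1) * (a₁ + a₄ + a₅ - a₂ - a₃ - 1)
      + (a₃ + a₄ + a₅ - a₁ - a₂ - 1) * (a₁ + a₂ + a₃ - a₄ - a₅ - 1)
      + (a₂ + a₃ + a₅ - a₁ - a₄ - 1) * (a₁ + a₃ + a₄ - a₂ - a₅ - 1)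
      + (a₂ + a₃ + a₄ - a₁ - a₅ - 1) * (a₁ + a₃ + a₅ - a₂ - a₄ - 1)
      + (a₂ + a₄ + a₅ - a₁ - a₃ - 1) * (a₁ + a₂ + a₃ - a₄ - a₅ - 1)
      + (a₂ + a₃ + a₅ - a₁ - a₄ - 1) * (a₁ + a₂ + a₄ - a₃ - a₅ - 1)
      + (a₂ + a₃ + a₄ - a₁ - a₅ - 1) * (a₁ + a₂ + a₅ - a₃ - a₄ - 1)
      + (a₁ + a₄ + a₅ - a₂ - a₃ - 1) * (a₁ + a₂ + a₃ - a₄ - a₅ - 1)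
      + (a₁ + a₃ + a₅ - a₂ - a₄ - 1) * (a₁ + a₂ + a₄ - a₃ - a₅ - 1)
      + (a₁ + a₃ + a₄ - a₂ - a₅ - 1) * (a₁ + a₂ + a₅ - a₃ - a₄ - 1) := by
    have := mul_nonneg g12 g34; have := mul_nonneg g13 g24; have := mul_nonneg g14 g23
    have := mul_nonneg g12 g35; have := mul_nonneg g13 g25; have := mul_nonneg g15 g23
    have := mul_nonneg g12 g45; have := mul_nonneg g14 g25; have := mul_nonneg g15 g24
    have := mul_nonneg g13 g45; have := mul_nonneg g14 g35; have := mul_nonneg g15 g34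
    have := mul_nonneg g23 g45; have := mul_nonneg g24 g35; have := mul_nonneg g25 g34
    linarith
  have key : 4 * (a₁^2 + a₂^2 + a₃^2 + a₄^2 + a₅^2) ≤ S^2 - 2*S + 5 := by
    nlinarith [hT]
  have hS5 : 5 ≤ S := by simp only [hS]; linarith
  obtain ⟨m, hm⟩ : Even (S * (S + 1)) := Int.even_mul_succ_self S
  have hm2 : S * (S + 1) = 2 * m := by rw [hm]; ring
  have hm3 : 2 * m = S^2 + S := by linear_combination -hm2
  refine ⟨m - 2 * (a₁^2 + a₂^2 + a₃^2 + a₄^2 + a₅^2) + 1, by linarith, ?_⟩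
  have hmr : 2 * (m:ℝ) = (S:ℝ)^2 + S := by exact_mod_cast hm3
  push_cast [hS] at hmr ⊢
  linear_combination -hmr / 2
end

section
/- Let a₁,...,a₅ be positive integers with a₁ > a₂, a₄ > a₅, forming a nearly regular tuple. Let P ⊆ ℝ² be the polytope P = {(x,y) : a₁−a₂ ≤ x ≤ a₁+a₂, a₄−a₅ ≤ y ≤ a₄+a₅, |x−y| ≤ a₃ ≤ x+y}. Then the area of P equals 4a₂a₅ − ½(a₂+a₄+a₅−a₁−a₃)₊² − ½(a₂+a₃+a₅−a₁−a₄)₊² − ½(a₁+a₂+a₅−a₃−a₄)₊², where t₊ = max(t,0). -/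
open MeasureTheory Set

def Pent (a₁ a₂ a₃ a₄ a₅ : ℝ) : Set (ℝ × ℝ) :=
  {p : ℝ × ℝ | a₁ - a₂ ≤ p.1 ∧ p.1 ≤ a₁ + a₂ ∧ a₄ - a₅ ≤ p.2 ∧ p.2 ≤ a₄ + a₅ ∧
    |p.1 - p.2| ≤ a₃ ∧ a₃ ≤ p.1 + p.2}




lemma tri_meas (c d s : ℝ) :
    MeasurableSet {p : ℝ × ℝ | c ≤ p.1 ∧ d ≤ p.2 ∧ p.1 + p.2 < s} := by
  apply MeasurableSet.inter (measurableSet_le measurable_const measurable_fst)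
  exact MeasurableSet.inter (measurableSet_le measurable_const measurable_snd)
    (measurableSet_lt (measurable_fst.add measurable_snd) measurable_const)

lemma tri_vol (c d s : ℝ) :
    volume {p : ℝ × ℝ | c ≤ p.1 ∧ d ≤ p.2 ∧ p.1 + p.2 < s} =
      ENNReal.ofReal ((max (s - c - d) 0) ^ 2 / 2) := by
  rw [Measure.volume_eq_prod, Measure.prod_apply (tri_meas c d s)]
  have hslice : ∀ x : ℝ, volume (Prod.mk x ⁻¹' {p : ℝ × ℝ | c ≤ p.1 ∧ d ≤ p.2 ∧ p.1 + p.2 < s})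
      = Set.indicator (Ici c) (fun x => ENNReal.ofReal (s - d - x)) x := by
    intro x
    by_cases hx : c ≤ x
    · have : Prod.mk x ⁻¹' {p : ℝ × ℝ | c ≤ p.1 ∧ d ≤ p.2 ∧ p.1 + p.2 < s} = Ico d (s - x) := by
        ext y; simp [hx, mem_Ico]; intro _; constructor <;> intro <;> linarith
      rw [this, Real.volume_Ico, indicator_of_mem (mem_Ici.mpr hx)]
      ring_nf
    · have : Prod.mk x ⁻¹' {p : ℝ × ℝ | c ≤ p.1 ∧ d ≤ p.2 ∧ p.1 + p.2 < s} = ∅ := by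
        ext y; simp [hx]
      rw [this, measure_empty, indicator_of_notMem (by simpa using hx)]
  simp_rw [hslice]
  rw [lintegral_indicator measurableSet_Ici]
  by_cases hcm : s - d ≤ c
  · have hz : ∀ x ∈ Ici c, ENNReal.ofReal (s - d - x) = 0 := by
      intro x hx
      rw [ENNReal.ofReal_eq_zero]
      simp only [mem_Ici] at hx; linarith
    rw [setLIntegral_congr_fun measurableSet_Ici hz]
    simp only [lintegral_zero]
    rw [max_eq_right (by linarith)]
    simp
  · push_neg at hcm
    have hsplit : Ici c = Ico c (s - d) ∪ Ici (s - d) := by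
      rw [Ico_union_Ici_eq_Ici hcm.le]
    rw [hsplit, lintegral_union measurableSet_Ici ((Set.Iio_disjoint_Ici le_rfl).mono_left Set.Ico_subset_Iio_self)]
    have hz : ∀ x ∈ Ici (s - d), ENNReal.ofReal (s - d - x) = 0 := by
      intro x hx; rw [ENNReal.ofReal_eq_zero]; simp only [mem_Ici] at hx; linarith
    rw [setLIntegral_congr_fun measurableSet_Ici hz]
    simp only [lintegral_zero, add_zero]
    have hint : IntegrableOn (fun x => s - d - x) (Ico c (s - d)) := by
      exact ((Continuous.integrableOn_Icc (by continuity)).mono_set Ico_subset_Icc_self)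
    rw [← ofReal_integral_eq_lintegral_ofReal hint]
    · congr 1
      have : ∫ x in Ico c (s - d), (s - d - x) = ∫ x in c..(s-d), (s - d - x) := by
        rw [intervalIntegral.integral_of_le hcm.le, integral_Ioc_eq_integral_Ioo,
          ← integral_Ico_eq_integral_Ioo]
      rw [this, intervalIntegral.integral_sub intervalIntegrable_const
        intervalIntegral.intervalIntegrable_id, intervalIntegral.integral_const, integral_id,
        max_eq_left (by linarith)]
      simp [smul_eq_mul]; ring
    · filter_upwards [self_mem_ae_restrict measurableSet_Ico] with x hx
      simp only [mem_Ico] at hx; simp; linarith [hx.2]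

lemma mp_negfst : MeasurePreserving (fun p : ℝ × ℝ => (-p.1, p.2)) volume volume := by
  have := (Measure.measurePreserving_neg (volume : Measure ℝ)).prod
    (MeasurePreserving.id (volume : Measure ℝ))
  rw [← Measure.volume_eq_prod] at this
  convert this using 1 <;> rfl

lemma mp_negsnd : MeasurePreserving (fun p : ℝ × ℝ => (p.1, -p.2)) volume volume := by
  have := (MeasurePreserving.id (volume : Measure ℝ)).prod
    (Measure.measurePreserving_neg (volume : Measure ℝ))
  rw [← Measure.volume_eq_prod] at this
  convert this using 1 <;> rfl

lemma tri_vol_B (c d s : ℝ) :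
    volume {p : ℝ × ℝ | p.1 ≤ c ∧ d ≤ p.2 ∧ s < p.1 - p.2} =
      ENNReal.ofReal ((max (c - d - s) 0) ^ 2 / 2) := by
  have hpre : {p : ℝ × ℝ | p.1 ≤ c ∧ d ≤ p.2 ∧ s < p.1 - p.2} =
      (fun p : ℝ × ℝ => (-p.1, p.2)) ⁻¹' {p : ℝ × ℝ | -c ≤ p.1 ∧ d ≤ p.2 ∧ p.1 + p.2 < -s} := by
    ext p; simp only [mem_setOf_eq, mem_preimage]
    constructor <;> rintro ⟨h1, h2, h3⟩ <;> refine ⟨by linarith, h2, by linarith⟩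
  rw [hpre, mp_negfst.measure_preimage (tri_meas _ _ _).nullMeasurableSet, tri_vol]
  congr 2
  ring
lemma tri_vol_C (c d s : ℝ) :
    volume {p : ℝ × ℝ | c ≤ p.1 ∧ p.2 ≤ d ∧ s < p.2 - p.1} =
      ENNReal.ofReal ((max (d - c - s) 0) ^ 2 / 2) := by
  have hpre : {p : ℝ × ℝ | c ≤ p.1 ∧ p.2 ≤ d ∧ s < p.2 - p.1} =
      (fun p : ℝ × ℝ => (p.1, -p.2)) ⁻¹' {p : ℝ × ℝ | c ≤ p.1 ∧ -d ≤ p.2 ∧ p.1 + p.2 < -s} := by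
    ext p; simp only [mem_setOf_eq, mem_preimage]
    constructor <;> rintro ⟨h1, h2, h3⟩ <;> refine ⟨h1, by linarith, by linarith⟩
  rw [hpre, mp_negsnd.measure_preimage (tri_meas _ _ _).nullMeasurableSet, tri_vol]
  congr 2
  ring

lemma pent_vol (a₁ a₂ a₃ a₄ a₅ : ℝ) (h : NearlyRegular a₁ a₂ a₃ a₄ a₅)
    (h12 : a₂ < a₁) (h45 : a₅ < a₄) :
    volume (Pent a₁ a₂ a₃ a₄ a₅) =
      ENNReal.ofReal
        (4 * a₂ * a₅
          - (1/2) * (max (a₂ + a₄ + a₅ - a₁ - a₃) 0)^2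
          - (1/2) * (max (a₂ + a₃ + a₅ - a₁ - a₄) 0)^2
          - (1/2) * (max (a₁ + a₂ + a₅ - a₃ - a₄) 0)^2) := by
  obtain ⟨p1, p2, p3, p4, p5, q1, q2, q3, q4, q5, q6, q7, q8, q9, q10⟩ := h
  set R : Set (ℝ × ℝ) := Icc (a₁ - a₂) (a₁ + a₂) ×ˢ Icc (a₄ - a₅) (a₄ + a₅) with hR
  set T₁ : Set (ℝ × ℝ) := {p | a₁ - a₂ ≤ p.1 ∧ p.2 ≤ a₄ + a₅ ∧ a₃ < p.2 - p.1} with hT₁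
  set T₂ : Set (ℝ × ℝ) := {p | a₁ - a₂ ≤ p.1 ∧ a₄ - a₅ ≤ p.2 ∧ p.1 + p.2 < a₃} with hT₂
  set T₃ : Set (ℝ × ℝ) := {p | p.1 ≤ a₁ + a₂ ∧ a₄ - a₅ ≤ p.2 ∧ a₃ < p.1 - p.2} with hT₃
  have hm₁ : MeasurableSet T₁ :=
    (measurableSet_le measurable_const measurable_fst).inter
      ((measurableSet_le measurable_snd measurable_const).inter
        (measurableSet_lt measurable_const (measurable_snd.sub measurable_fst)))
  have hm₂ : MeasurableSet T₂ := tri_meas _ _ _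
  have hm₃ : MeasurableSet T₃ :=
    (measurableSet_le measurable_fst measurable_const).inter
      ((measurableSet_le measurable_const measurable_snd).inter
        (measurableSet_lt measurable_const (measurable_fst.sub measurable_snd)))
  have hsub : T₁ ∪ T₂ ∪ T₃ ⊆ R := by
    rintro p ((⟨hp1, hp2, hp3⟩ | ⟨hp1, hp2, hp3⟩) | ⟨hp1, hp2, hp3⟩) <;>
      · simp only [hR, mem_prod, mem_Icc]
        exact ⟨⟨by linarith, by linarith⟩, by linarith, by linarith⟩
  have hPent : Pent a₁ a₂ a₃ a₄ a₅ = R \ (T₁ ∪ T₂ ∪ T₃) := by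
    ext p
    simp only [Pent, mem_setOf_eq, mem_diff, mem_union, hR, hT₁, hT₂, hT₃, mem_prod, mem_Icc,
      abs_le, not_or]
    constructor
    · rintro ⟨hx1, hx2, hy1, hy2, ⟨ha, hb⟩, hc⟩
      refine ⟨⟨⟨hx1, hx2⟩, hy1, hy2⟩, ?_⟩
      push_neg
      refine ⟨⟨?_, ?_⟩, ?_⟩ <;> intro _ _ <;> linarith
    · rintro ⟨⟨⟨hx1, hx2⟩, hy1, hy2⟩, hn⟩
      push_neg at hn
      obtain ⟨⟨n1, n2⟩, n3⟩ := hn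
      exact ⟨hx1, hx2, hy1, hy2, ⟨by linarith [n1 hx1 hy2], by linarith [n3 hx2 hy1]⟩,
        by linarith [n2 hx1 hy1]⟩
  have hd12 : Disjoint T₁ T₂ := by
    rw [Set.disjoint_left]
    rintro p ⟨hp1, hp2, hp3⟩ ⟨hq1, hq2, hq3⟩
    linarith
  have hd13 : Disjoint T₁ T₃ := by
    rw [Set.disjoint_left]
    rintro p ⟨hp1, hp2, hp3⟩ ⟨hq1, hq2, hq3⟩
    linarith
  have hd23 : Disjoint T₂ T₃ := by
    rw [Set.disjoint_left]
    rintro p ⟨hp1, hp2, hp3⟩ ⟨hq1, hq2, hq3⟩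
    linarith
  have hvR : volume R = ENNReal.ofReal (4 * a₂ * a₅) := by
    rw [hR, Measure.volume_eq_prod, Measure.prod_prod, Real.volume_Icc, Real.volume_Icc,
      ← ENNReal.ofReal_mul (by linarith)]
    congr 1
    ring
  have hv₁ : volume T₁ = ENNReal.ofReal ((max (a₂ + a₄ + a₅ - a₁ - a₃) 0) ^ 2 / 2) := by
    rw [hT₁, tri_vol_C]
    congr 3
    ring
  have hv₂ : volume T₂ = ENNReal.ofReal ((max (a₂ + a₃ + a₅ - a₁ - a₄) 0) ^ 2 / 2) := by
    rw [hT₂, tri_vol]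
    congr 3
    ring
  have hv₃ : volume T₃ = ENNReal.ofReal ((max (a₁ + a₂ + a₅ - a₃ - a₄) 0) ^ 2 / 2) := by
    rw [hT₃, tri_vol_B]
    congr 3
    ring
  have hU : volume (T₁ ∪ T₂ ∪ T₃) = volume T₁ + volume T₂ + volume T₃ := by
    rw [measure_union (Set.disjoint_union_left.mpr ⟨hd13, hd23⟩) hm₃, measure_union hd12 hm₂]
  have hUfin : volume (T₁ ∪ T₂ ∪ T₃) ≠ ⊤ := by
    rw [hU, hv₁, hv₂, hv₃]
    simp [ENNReal.add_ne_top]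
  rw [hPent, measure_diff hsub ((hm₁.union hm₂).union hm₃).nullMeasurableSet hUfin,
    hU, hv₁, hv₂, hv₃, hvR]
  have e1 : (0:ℝ) ≤ (max (a₂ + a₄ + a₅ - a₁ - a₃) 0) ^ 2 / 2 := by positivity
  have e2 : (0:ℝ) ≤ (max (a₂ + a₃ + a₅ - a₁ - a₄) 0) ^ 2 / 2 := by positivity
  have e3 : (0:ℝ) ≤ (max (a₁ + a₂ + a₅ - a₃ - a₄) 0) ^ 2 / 2 := by positivity
  have hr : 4 * a₂ * a₅
          - (1/2) * (max (a₂ + a₄ + a₅ - a₁ - a₃) 0)^2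
          - (1/2) * (max (a₂ + a₃ + a₅ - a₁ - a₄) 0)^2
          - (1/2) * (max (a₁ + a₂ + a₅ - a₃ - a₄) 0)^2
      = 4 * a₂ * a₅ - (max (a₂ + a₄ + a₅ - a₁ - a₃) 0)^2/2
          - (max (a₂ + a₃ + a₅ - a₁ - a₄) 0)^2/2
          - (max (a₁ + a₂ + a₅ - a₃ - a₄) 0)^2/2 := by ring
  rw [hr, ENNReal.ofReal_sub _ e3, ENNReal.ofReal_sub _ e2, ENNReal.ofReal_sub _ e1,
    tsub_add_eq_tsub_tsub, tsub_add_eq_tsub_tsub]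

theorem stmt_10 (a₁ a₂ a₃ a₄ a₅ : ℤ)
    (h : NearlyRegular (a₁ : ℝ) a₂ a₃ a₄ a₅)
    (h12 : a₂ < a₁) (h45 : a₅ < a₄) :
    MeasureTheory.volume (Pent (a₁ : ℝ) a₂ a₃ a₄ a₅) =
      ENNReal.ofReal
        (4 * (a₂:ℝ) * a₅
          - (1/2) * (max ((a₂:ℝ) + a₄ + a₅ - a₁ - a₃) 0)^2
          - (1/2) * (max ((a₂:ℝ) + a₃ + a₅ - a₁ - a₄) 0)^2
          - (1/2) * (max ((a₁:ℝ) + a₂ + a₅ - a₃ - a₄) 0)^2) :=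
  pent_vol _ _ _ _ _ h (by exact_mod_cast h12) (by exact_mod_cast h45)
end

section
/- Let a₁,...,a₅ be positive integers with a₁ > a₂, a₄ > a₅, forming a nearly regular tuple, and let P = {(x,y) ∈ ℝ² : a₁−a₂ ≤ x ≤ a₁+a₂, a₄−a₅ ≤ y ≤ a₄+a₅, |x−y| ≤ a₃ ≤ x+y}. Then the number of integer lattice points on the boundary of P is a₁+a₂+a₃+a₄+a₅. -/
lemma exists_eq_mid {α : Type*} {p q : α → Prop} (x : α) :
    (∃ a, p a ∧ a = x ∧ q a) ↔ p x ∧ q x := by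
  constructor
  · rintro ⟨a, hp, rfl, hq⟩; exact ⟨hp, hq⟩
  · rintro ⟨hp, hq⟩; exact ⟨x, hp, rfl, hq⟩

lemma exists_eq_last {α : Type*} {p : α → Prop} {q : Prop} (x : α) :
    (∃ a, p a ∧ q ∧ a = x) ↔ p x ∧ q := by
  constructor
  · rintro ⟨a, hp, hq, rfl⟩; exact ⟨hp, hq⟩
  · rintro ⟨hp, hq⟩; exact ⟨x, hp, hq, rfl⟩

lemma pent_isClosed (a₁ a₂ a₃ a₄ a₅ : ℝ) : IsClosed (Pent a₁ a₂ a₃ a₄ a₅) := by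
  have h : Pent a₁ a₂ a₃ a₄ a₅ =
      {p : ℝ × ℝ | a₁ - a₂ ≤ p.1} ∩ {p | p.1 ≤ a₁ + a₂} ∩ {p | a₄ - a₅ ≤ p.2} ∩
      {p | p.2 ≤ a₄ + a₅} ∩ {p | |p.1 - p.2| ≤ a₃} ∩ {p | a₃ ≤ p.1 + p.2} := by
    ext p; simp [Pent]; tauto
  rw [h]
  exact (((((isClosed_le continuous_const continuous_fst).inter
    (isClosed_le continuous_fst continuous_const)).inter
    (isClosed_le continuous_const continuous_snd)).inter
    (isClosed_le continuous_snd continuous_const)).inter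
    (isClosed_le ((continuous_fst.sub continuous_snd).abs) continuous_const)).inter
    (isClosed_le continuous_const (continuous_fst.add continuous_snd))

lemma pent_interior (a₁ a₂ a₃ a₄ a₅ : ℝ) :
    interior (Pent a₁ a₂ a₃ a₄ a₅) =
      {p : ℝ × ℝ | a₁ - a₂ < p.1 ∧ p.1 < a₁ + a₂ ∧ a₄ - a₅ < p.2 ∧ p.2 < a₄ + a₅ ∧
        |p.1 - p.2| < a₃ ∧ a₃ < p.1 + p.2} := by
  apply Set.Subset.antisymm
  · intro p hp
    rw [mem_interior_iff_mem_nhds, Metric.mem_nhds_iff] at hp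
    obtain ⟨ε, hε, hb⟩ := hp
    have hq : ∀ δ₁ δ₂ : ℝ, |δ₁| < ε → |δ₂| < ε →
        (p.1 + δ₁, p.2 + δ₂) ∈ Pent a₁ a₂ a₃ a₄ a₅ := by
      intro δ₁ δ₂ hd1 hd2
      apply hb
      rw [Metric.mem_ball, Prod.dist_eq]
      simp only [Real.dist_eq, add_sub_cancel_left]
      exact max_lt hd1 hd2
    have e : |ε / 2| < ε := by rw [abs_of_pos (by linarith)]; linarith
    have z : |(0 : ℝ)| < ε := by simpa using hε
    have A := hq (ε / 2) 0 e z
    have B := hq (-(ε / 2)) 0 (by rwa [abs_neg]) z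
    have C := hq 0 (ε / 2) z e
    have D := hq 0 (-(ε / 2)) z (by rwa [abs_neg])
    simp only [Pent, Set.mem_setOf_eq, abs_le] at A B C D
    simp only [Set.mem_setOf_eq, abs_lt]
    obtain ⟨A1, A2, A3, A4, ⟨A5, A6⟩, A7⟩ := A
    obtain ⟨B1, B2, B3, B4, ⟨B5, B6⟩, B7⟩ := B
    obtain ⟨C1, C2, C3, C4, ⟨C5, C6⟩, C7⟩ := C
    obtain ⟨D1, D2, D3, D4, ⟨D5, D6⟩, D7⟩ := D
    exact ⟨by linarith, by linarith, by linarith, by linarith,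
      ⟨by linarith, by linarith⟩, by linarith⟩
  · apply interior_maximal
    · intro p hp
      simp only [Set.mem_setOf_eq] at hp ⊢
      exact ⟨hp.1.le, hp.2.1.le, hp.2.2.1.le, hp.2.2.2.1.le, hp.2.2.2.2.1.le,
        hp.2.2.2.2.2.le⟩
    · have h : {p : ℝ × ℝ | a₁ - a₂ < p.1 ∧ p.1 < a₁ + a₂ ∧ a₄ - a₅ < p.2 ∧ p.2 < a₄ + a₅ ∧
          |p.1 - p.2| < a₃ ∧ a₃ < p.1 + p.2} =
          {p : ℝ × ℝ | a₁ - a₂ < p.1} ∩ {p | p.1 < a₁ + a₂} ∩ {p | a₄ - a₅ < p.2} ∩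
          {p | p.2 < a₄ + a₅} ∩ {p | |p.1 - p.2| < a₃} ∩ {p | a₃ < p.1 + p.2} := by
        ext p; simp; tauto
      rw [h]
      exact (((((isOpen_lt continuous_const continuous_fst).inter
        (isOpen_lt continuous_fst continuous_const)).inter
        (isOpen_lt continuous_const continuous_snd)).inter
        (isOpen_lt continuous_snd continuous_const)).inter
        (isOpen_lt ((continuous_fst.sub continuous_snd).abs) continuous_const)).inter
        (isOpen_lt continuous_const (continuous_fst.add continuous_snd))

set_option maxHeartbeats 1600000 in
theorem stmt_11 (a₁ a₂ a₃ a₄ a₅ : ℤ)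
    (h : NearlyRegular (a₁ : ℝ) a₂ a₃ a₄ a₅)
    (h12 : a₂ < a₁) (h45 : a₅ < a₄) :
    ({p : ℤ × ℤ | ((p.1 : ℝ), (p.2 : ℝ)) ∈
        frontier (Pent (a₁ : ℝ) a₂ a₃ a₄ a₅)}.ncard : ℤ) =
      a₁ + a₂ + a₃ + a₄ + a₅ := by
  obtain ⟨h1, h2, h3, h4, h5, H1, H2, H3, H4, H5, H6, H7, H8, H9, H10⟩ := h
  have g1 : 0 < a₁ := by exact_mod_cast h1
  have g2 : 0 < a₂ := by exact_mod_cast h2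
  have g3 : 0 < a₃ := by exact_mod_cast h3
  have g4 : 0 < a₄ := by exact_mod_cast h4
  have g5 : 0 < a₅ := by exact_mod_cast h5
  have G1 : a₁ + a₂ < a₃ + a₄ + a₅ := by exact_mod_cast H1
  have G2 : a₁ + a₃ < a₂ + a₄ + a₅ := by exact_mod_cast H2
  have G3 : a₁ + a₄ < a₂ + a₃ + a₅ := by exact_mod_cast H3
  have G4 : a₁ + a₅ < a₂ + a₃ + a₄ := by exact_mod_cast H4
  have G5 : a₂ + a₃ < a₁ + a₄ + a₅ := by exact_mod_cast H5
  have G6 : a₂ + a₄ < a₁ + a₃ + a₅ := by exact_mod_cast H6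
  have G7 : a₂ + a₅ < a₁ + a₃ + a₄ := by exact_mod_cast H7
  have G8 : a₃ + a₄ < a₁ + a₂ + a₅ := by exact_mod_cast H8
  have G9 : a₃ + a₅ < a₁ + a₂ + a₄ := by exact_mod_cast H9
  have G10 : a₄ + a₅ < a₁ + a₂ + a₃ := by exact_mod_cast H10
  set E1 : Finset (ℤ × ℤ) :=
    (Finset.Ico (a₃ - (a₄ - a₅)) (a₃ + (a₄ - a₅))).image (fun t => (t, a₄ - a₅)) with hE1
  set E2 : Finset (ℤ × ℤ) :=
    (Finset.Ico (a₃ + (a₄ - a₅)) (a₁ + a₂)).image (fun t => (t, t - a₃)) with hE2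
  set E3 : Finset (ℤ × ℤ) :=
    (Finset.Ico (a₁ + a₂ - a₃) (a₄ + a₅)).image (fun t => (a₁ + a₂, t)) with hE3
  set E4 : Finset (ℤ × ℤ) :=
    (Finset.Ico (a₄ + a₅ - a₃ + 1) (a₁ + a₂ + 1)).image (fun t => (t, a₄ + a₅)) with hE4
  set E5 : Finset (ℤ × ℤ) :=
    (Finset.Ico (a₁ - a₂ + 1) (a₄ + a₅ - a₃ + 1)).image (fun t => (t, t + a₃)) with hE5
  set E6 : Finset (ℤ × ℤ) :=
    (Finset.Ico (a₃ - (a₁ - a₂) + 1) (a₃ + (a₁ - a₂) + 1)).image (fun t => (a₁ - a₂, t)) with hE6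
  set E7 : Finset (ℤ × ℤ) :=
    (Finset.Ico (a₁ - a₂) (a₃ - (a₄ - a₅))).image (fun t => (t, a₃ - t)) with hE7
  have key : {p : ℤ × ℤ | ((p.1 : ℝ), (p.2 : ℝ)) ∈
      frontier (Pent (a₁ : ℝ) a₂ a₃ a₄ a₅)} = ↑(E1 ∪ E2 ∪ E3 ∪ E4 ∪ E5 ∪ E6 ∪ E7) := by
    ext ⟨x, y⟩
    rw [Set.mem_setOf_eq, (pent_isClosed _ _ _ _ _).frontier_eq, pent_interior]
    simp only [Set.mem_diff, Pent, Set.mem_setOf_eq, abs_le, abs_lt, hE1, hE2, hE3, hE4,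
      hE5, hE6, hE7, Finset.coe_union, Set.mem_union, Finset.mem_coe, Finset.coe_image,
      Finset.coe_Ico, Set.mem_image, Set.mem_Ico, Prod.mk.injEq, exists_eq_mid,
      exists_eq_last, not_and, not_lt]
    have c1 : ((a₁ : ℝ) - a₂ ≤ x) ↔ (a₁ - a₂ ≤ x) := by exact_mod_cast Iff.rfl
    have c2 : ((x : ℝ) ≤ a₁ + a₂) ↔ (x ≤ a₁ + a₂) := by exact_mod_cast Iff.rfl
    have c3 : ((a₄ : ℝ) - a₅ ≤ y) ↔ (a₄ - a₅ ≤ y) := by exact_mod_cast Iff.rfl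
    have c4 : ((y : ℝ) ≤ a₄ + a₅) ↔ (y ≤ a₄ + a₅) := by exact_mod_cast Iff.rfl
    have c5 : (-(a₃ : ℝ) ≤ x - y) ↔ (-a₃ ≤ x - y) := by exact_mod_cast Iff.rfl
    have c6 : ((x : ℝ) - y ≤ a₃) ↔ (x - y ≤ a₃) := by exact_mod_cast Iff.rfl
    have c7 : ((a₃ : ℝ) ≤ x + y) ↔ (a₃ ≤ x + y) := by exact_mod_cast Iff.rfl
    have d1 : ((a₁ : ℝ) - a₂ < x) ↔ (a₁ - a₂ < x) := by exact_mod_cast Iff.rfl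
    have d2 : ((x : ℝ) < a₁ + a₂) ↔ (x < a₁ + a₂) := by exact_mod_cast Iff.rfl
    have d3 : ((a₄ : ℝ) - a₅ < y) ↔ (a₄ - a₅ < y) := by exact_mod_cast Iff.rfl
    have d4 : ((y : ℝ) < a₄ + a₅) ↔ (y < a₄ + a₅) := by exact_mod_cast Iff.rfl
    have d5 : (-(a₃ : ℝ) < x - y) ↔ (-a₃ < x - y) := by exact_mod_cast Iff.rfl
    have d6 : ((x : ℝ) - y < a₃) ↔ (x - y < a₃) := by exact_mod_cast Iff.rfl
    have d7 : ((a₃ : ℝ) < x + y) ↔ (a₃ < x + y) := by exact_mod_cast Iff.rfl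
    have c8 : ((x : ℝ) + y ≤ a₃) ↔ (x + y ≤ a₃) := by exact_mod_cast Iff.rfl
    clear d7
    rw [c1, c2, c3, c4, c5, c6, c7, d1, d2, d3, d4, d5, d6, c8]
    omega
  rw [key, Set.ncard_coe_finset]
  have inj1 : Function.Injective (fun t : ℤ => ((t, a₄ - a₅) : ℤ × ℤ)) := by
    intro a b hab; simpa using hab
  have inj2 : Function.Injective (fun t : ℤ => ((t, t - a₃) : ℤ × ℤ)) := by
    intro a b hab; simp only [Prod.mk.injEq] at hab; exact hab.1
  have inj3 : Function.Injective (fun t : ℤ => ((a₁ + a₂, t) : ℤ × ℤ)) := by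
    intro a b hab; simpa using hab
  have inj4 : Function.Injective (fun t : ℤ => ((t, a₄ + a₅) : ℤ × ℤ)) := by
    intro a b hab; simpa using hab
  have inj5 : Function.Injective (fun t : ℤ => ((t, t + a₃) : ℤ × ℤ)) := by
    intro a b hab; simp only [Prod.mk.injEq] at hab; exact hab.1
  have inj6 : Function.Injective (fun t : ℤ => ((a₁ - a₂, t) : ℤ × ℤ)) := by
    intro a b hab; simpa using hab
  have inj7 : Function.Injective (fun t : ℤ => ((t, a₃ - t) : ℤ × ℤ)) := by
    intro a b hab; simp only [Prod.mk.injEq] at hab; exact hab.1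
  have card1 : (E1.card : ℤ) = 2 * (a₄ - a₅) := by
    rw [hE1, Finset.card_image_of_injective _ inj1, Int.card_Ico]
    simp; omega
  have card2 : (E2.card : ℤ) = a₁ + a₂ - a₃ - a₄ + a₅ := by
    rw [hE2, Finset.card_image_of_injective _ inj2, Int.card_Ico]
    simp; omega
  have card3 : (E3.card : ℤ) = a₄ + a₅ - a₁ - a₂ + a₃ := by
    rw [hE3, Finset.card_image_of_injective _ inj3, Int.card_Ico]
    simp; omega
  have card4 : (E4.card : ℤ) = a₁ + a₂ - a₄ - a₅ + a₃ := by
    rw [hE4, Finset.card_image_of_injective _ inj4, Int.card_Ico]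
    simp; omega
  have card5 : (E5.card : ℤ) = a₄ + a₅ - a₃ - a₁ + a₂ := by
    rw [hE5, Finset.card_image_of_injective _ inj5, Int.card_Ico]
    simp; omega
  have card6 : (E6.card : ℤ) = 2 * (a₁ - a₂) := by
    rw [hE6, Finset.card_image_of_injective _ inj6, Int.card_Ico]
    simp; omega
  have card7 : (E7.card : ℤ) = a₃ - (a₄ - a₅) - (a₁ - a₂) := by
    rw [hE7, Finset.card_image_of_injective _ inj7, Int.card_Ico]
    simp; omega
  have memE1 : ∀ x y : ℤ, (x, y) ∈ E1 ↔ (a₃ - (a₄ - a₅) ≤ x ∧ x < a₃ + (a₄ - a₅)) ∧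
      a₄ - a₅ = y := by
    intro x y; rw [hE1]; simp [Finset.mem_image, exists_eq_mid]
  have memE2 : ∀ x y : ℤ, (x, y) ∈ E2 ↔ (a₃ + (a₄ - a₅) ≤ x ∧ x < a₁ + a₂) ∧ x - a₃ = y := by
    intro x y; rw [hE2]; simp [Finset.mem_image, exists_eq_mid]
  have memE3 : ∀ x y : ℤ, (x, y) ∈ E3 ↔ (a₁ + a₂ - a₃ ≤ y ∧ y < a₄ + a₅) ∧ a₁ + a₂ = x := by
    intro x y; rw [hE3]; simp [Finset.mem_image, exists_eq_last]
  have memE4 : ∀ x y : ℤ, (x, y) ∈ E4 ↔ (a₄ + a₅ - a₃ + 1 ≤ x ∧ x < a₁ + a₂ + 1) ∧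
      a₄ + a₅ = y := by
    intro x y; rw [hE4]; simp [Finset.mem_image, exists_eq_mid]
  have memE5 : ∀ x y : ℤ, (x, y) ∈ E5 ↔ (a₁ - a₂ + 1 ≤ x ∧ x < a₄ + a₅ - a₃ + 1) ∧
      x + a₃ = y := by
    intro x y; rw [hE5]; simp [Finset.mem_image, exists_eq_mid]
  have memE6 : ∀ x y : ℤ, (x, y) ∈ E6 ↔ (a₃ - (a₁ - a₂) + 1 ≤ y ∧ y < a₃ + (a₁ - a₂) + 1) ∧
      a₁ - a₂ = x := by
    intro x y; rw [hE6]; simp [Finset.mem_image, exists_eq_last]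
  have memE7 : ∀ x y : ℤ, (x, y) ∈ E7 ↔ (a₁ - a₂ ≤ x ∧ x < a₃ - (a₄ - a₅)) ∧ a₃ - x = y := by
    intro x y; rw [hE7]; simp [Finset.mem_image, exists_eq_mid]
  have dsj : ∀ (A B : Finset (ℤ × ℤ)), (∀ x y : ℤ, (x, y) ∈ A → (x, y) ∈ B → False) →
      Disjoint A B := by
    intro A B hAB
    rw [Finset.disjoint_left]
    rintro ⟨x, y⟩ hA hB
    exact hAB x y hA hB
  have d12 : Disjoint E1 E2 := dsj _ _ (by intro x y hx hy; rw [memE1] at hx; rw [memE2] at hy; omega)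
  have d13 : Disjoint E1 E3 := dsj _ _ (by intro x y hx hy; rw [memE1] at hx; rw [memE3] at hy; omega)
  have d14 : Disjoint E1 E4 := dsj _ _ (by intro x y hx hy; rw [memE1] at hx; rw [memE4] at hy; omega)
  have d15 : Disjoint E1 E5 := dsj _ _ (by intro x y hx hy; rw [memE1] at hx; rw [memE5] at hy; omega)
  have d16 : Disjoint E1 E6 := dsj _ _ (by intro x y hx hy; rw [memE1] at hx; rw [memE6] at hy; omega)
  have d17 : Disjoint E1 E7 := dsj _ _ (by intro x y hx hy; rw [memE1] at hx; rw [memE7] at hy; omega)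
  have d23 : Disjoint E2 E3 := dsj _ _ (by intro x y hx hy; rw [memE2] at hx; rw [memE3] at hy; omega)
  have d24 : Disjoint E2 E4 := dsj _ _ (by intro x y hx hy; rw [memE2] at hx; rw [memE4] at hy; omega)
  have d25 : Disjoint E2 E5 := dsj _ _ (by intro x y hx hy; rw [memE2] at hx; rw [memE5] at hy; omega)
  have d26 : Disjoint E2 E6 := dsj _ _ (by intro x y hx hy; rw [memE2] at hx; rw [memE6] at hy; omega)
  have d27 : Disjoint E2 E7 := dsj _ _ (by intro x y hx hy; rw [memE2] at hx; rw [memE7] at hy; omega)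
  have d34 : Disjoint E3 E4 := dsj _ _ (by intro x y hx hy; rw [memE3] at hx; rw [memE4] at hy; omega)
  have d35 : Disjoint E3 E5 := dsj _ _ (by intro x y hx hy; rw [memE3] at hx; rw [memE5] at hy; omega)
  have d36 : Disjoint E3 E6 := dsj _ _ (by intro x y hx hy; rw [memE3] at hx; rw [memE6] at hy; omega)
  have d37 : Disjoint E3 E7 := dsj _ _ (by intro x y hx hy; rw [memE3] at hx; rw [memE7] at hy; omega)
  have d45 : Disjoint E4 E5 := dsj _ _ (by intro x y hx hy; rw [memE4] at hx; rw [memE5] at hy; omega)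
  have d46 : Disjoint E4 E6 := dsj _ _ (by intro x y hx hy; rw [memE4] at hx; rw [memE6] at hy; omega)
  have d47 : Disjoint E4 E7 := dsj _ _ (by intro x y hx hy; rw [memE4] at hx; rw [memE7] at hy; omega)
  have d56 : Disjoint E5 E6 := dsj _ _ (by intro x y hx hy; rw [memE5] at hx; rw [memE6] at hy; omega)
  have d57 : Disjoint E5 E7 := dsj _ _ (by intro x y hx hy; rw [memE5] at hx; rw [memE7] at hy; omega)
  have d67 : Disjoint E6 E7 := dsj _ _ (by intro x y hx hy; rw [memE6] at hx; rw [memE7] at hy; omega)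
  have hcard : (E1 ∪ E2 ∪ E3 ∪ E4 ∪ E5 ∪ E6 ∪ E7).card =
      E1.card + E2.card + E3.card + E4.card + E5.card + E6.card + E7.card := by
    rw [Finset.card_union_of_disjoint (by
        refine Finset.disjoint_union_left.mpr ⟨?_, d67⟩
        refine Finset.disjoint_union_left.mpr ⟨?_, d57⟩
        refine Finset.disjoint_union_left.mpr ⟨?_, d47⟩
        refine Finset.disjoint_union_left.mpr ⟨?_, d37⟩
        exact Finset.disjoint_union_left.mpr ⟨d17, d27⟩),
      Finset.card_union_of_disjoint (by
        refine Finset.disjoint_union_left.mpr ⟨?_, d56⟩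
        refine Finset.disjoint_union_left.mpr ⟨?_, d46⟩
        refine Finset.disjoint_union_left.mpr ⟨?_, d36⟩
        exact Finset.disjoint_union_left.mpr ⟨d16, d26⟩),
      Finset.card_union_of_disjoint (by
        refine Finset.disjoint_union_left.mpr ⟨?_, d45⟩
        refine Finset.disjoint_union_left.mpr ⟨?_, d35⟩
        exact Finset.disjoint_union_left.mpr ⟨d15, d25⟩),
      Finset.card_union_of_disjoint (by
        refine Finset.disjoint_union_left.mpr ⟨?_, d34⟩
        exact Finset.disjoint_union_left.mpr ⟨d14, d24⟩),
      Finset.card_union_of_disjoint (Finset.disjoint_union_left.mpr ⟨d13, d23⟩),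
      Finset.card_union_of_disjoint d12]
  rw [hcard]
  push_cast
  omega
end

section
/- Let a₁,...,a₅ be positive integers with a₁ > a₂, a₄ > a₅, forming a nearly regular tuple, and let P = {(x,y) ∈ ℝ² : a₁−a₂ ≤ x ≤ a₁+a₂, a₄−a₅ ≤ y ≤ a₄+a₅, |x−y| ≤ a₃ ≤ x+y}. Then the number of integer lattice points in P equals ½(Σaᵢ)² − 2(Σaᵢ²) + ½(Σaᵢ) + 1. -/
/-
The pentagon is the rectangle `[a₁ - a₂, a₁ + a₂] × [a₄ - a₅, a₄ + a₅]`, with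
`(2a₂ + 1)(2a₅ + 1)` lattice points, with three corners cut off by the lines `x - y = a₃`,
`y - x = a₃` and `x + y = a₃`. The nearly-regular inequalities make each of these lines cross
the two sides adjacent to its corner, so, up to a reflection and a translation, each removed
corner is the standard triangle `{i, j ≥ 0, i + j < k}` with `k(k+1)/2` points, and
`a₁ > a₂`, `a₄ > a₅` keep the three corners disjoint. Subtracting and expanding gives the
formula.
-/

open Finset

theorem two_mul_card_range_prod_filter_add_lt (k : ℕ) :
    2 * #((range k ×ˢ range k).filter fun p : ℕ × ℕ => p.1 + p.2 < k) = k * (k + 1) := by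
  have h : ((range k ×ˢ range k).filter fun p : ℕ × ℕ => p.1 + p.2 < k) =
      (range k).biUnion (HasAntidiagonal.antidiagonal ·) := by
    ext ⟨i, j⟩
    simp only [mem_filter, mem_product, mem_range, mem_biUnion, HasAntidiagonal.mem_antidiagonal,
      exists_eq_right', and_iff_right_iff_imp]
    omega
  have hdisj : Set.PairwiseDisjoint ↑(range k) (HasAntidiagonal.antidiagonal · : ℕ → _) :=
    fun m _ n _ hmn => disjoint_left.2 fun p hm hn => hmn <|
      (HasAntidiagonal.mem_antidiagonal.1 hm).symm.trans (HasAntidiagonal.mem_antidiagonal.1 hn)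
  have gauss := sum_range_id_mul_two (k + 1)
  rw [sum_range_succ'] at gauss
  rw [h, card_biUnion hdisj]
  simp only [Nat.card_antidiagonal, add_zero, add_tsub_cancel_right] at gauss ⊢
  linarith

theorem two_mul_card_Icc_prod_filter_add_lt (l₁ u₁ l₂ u₂ c : ℤ) (hk : 0 ≤ c - l₁ - l₂)
    (hk₁ : c - l₁ - l₂ ≤ u₁ - l₁ + 1) (hk₂ : c - l₁ - l₂ ≤ u₂ - l₂ + 1) :
    2 * (#((Icc l₁ u₁ ×ˢ Icc l₂ u₂).filter fun p => p.1 + p.2 < c) : ℤ) =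
      (c - l₁ - l₂) * (c - l₁ - l₂ + 1) := by
  obtain ⟨k, hk⟩ := Int.eq_ofNat_of_zero_le hk
  have : #((Icc l₁ u₁ ×ˢ Icc l₂ u₂).filter fun p => p.1 + p.2 < c) =
      #((range k ×ˢ range k).filter fun p : ℕ × ℕ => p.1 + p.2 < k) := by
    refine card_nbij' (fun p => ((p.1 - l₁).toNat, (p.2 - l₂).toNat))
      (fun p => (l₁ + p.1, l₂ + p.2)) ?_ ?_ ?_ ?_ <;> rintro ⟨x, y⟩ <;>
      simp only [coe_filter, Set.mem_ofPred_eq, mem_product, mem_Icc, mem_range, Prod.ext_iff] <;>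
      omega
  rw [this, hk]
  exact_mod_cast two_mul_card_range_prod_filter_add_lt k

theorem two_mul_card_Icc_prod_filter_lt_fst_sub (l₁ u₁ l₂ u₂ c : ℤ) (hk : 0 ≤ u₁ - l₂ - c)
    (hk₁ : u₁ - l₂ - c ≤ u₁ - l₁ + 1) (hk₂ : u₁ - l₂ - c ≤ u₂ - l₂ + 1) :
    2 * (#((Icc l₁ u₁ ×ˢ Icc l₂ u₂).filter fun p => c < p.1 - p.2) : ℤ) =
      (u₁ - l₂ - c) * (u₁ - l₂ - c + 1) := by
  have : #((Icc l₁ u₁ ×ˢ Icc l₂ u₂).filter fun p => c < p.1 - p.2) =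
      #((Icc (-u₁) (-l₁) ×ˢ Icc l₂ u₂).filter fun p => p.1 + p.2 < -c) := by
    refine card_nbij' (fun p : ℤ × ℤ => (-p.1, p.2)) (fun p : ℤ × ℤ => (-p.1, p.2)) ?_ ?_ ?_ ?_ <;>
      rintro ⟨x, y⟩ <;>
      simp only [coe_filter, Set.mem_ofPred_eq, mem_product, mem_Icc, neg_neg, implies_true] <;>
      omega
  rw [this, two_mul_card_Icc_prod_filter_add_lt] <;> [ring; omega; omega; omega]

theorem two_mul_card_Icc_prod_filter_lt_snd_sub (l₁ u₁ l₂ u₂ c : ℤ) (hk : 0 ≤ u₂ - l₁ - c)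
    (hk₁ : u₂ - l₁ - c ≤ u₁ - l₁ + 1) (hk₂ : u₂ - l₁ - c ≤ u₂ - l₂ + 1) :
    2 * (#((Icc l₁ u₁ ×ˢ Icc l₂ u₂).filter fun p => c < p.2 - p.1) : ℤ) =
      (u₂ - l₁ - c) * (u₂ - l₁ - c + 1) := by
  have : #((Icc l₁ u₁ ×ˢ Icc l₂ u₂).filter fun p => c < p.2 - p.1) =
      #((Icc l₁ u₁ ×ˢ Icc (-u₂) (-l₂)).filter fun p => p.1 + p.2 < -c) := by
    refine card_nbij' (fun p : ℤ × ℤ => (p.1, -p.2)) (fun p : ℤ × ℤ => (p.1, -p.2)) ?_ ?_ ?_ ?_ <;>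
      rintro ⟨x, y⟩ <;>
      simp only [coe_filter, Set.mem_ofPred_eq, mem_product, mem_Icc, neg_neg, implies_true] <;>
      omega
  rw [this, two_mul_card_Icc_prod_filter_add_lt] <;> [ring; omega; omega; omega]

theorem card_eq_card_filter_not_or_add {α : Type*} [DecidableEq α] (s : Finset α)
    (p q r : α → Prop) [DecidablePred p] [DecidablePred q] [DecidablePred r]
    (hpq : ∀ a ∈ s, p a → ¬q a) (hpr : ∀ a ∈ s, p a → ¬r a) (hqr : ∀ a ∈ s, q a → ¬r a) :
    #s = #(s.filter fun a => ¬(p a ∨ q a ∨ r a)) + #(s.filter p) + #(s.filter q) +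
      #(s.filter r) := by
  rw [← card_filter_add_card_filter_not (p := fun a => p a ∨ q a ∨ r a), filter_or, filter_or,
    card_union_of_disjoint, card_union_of_disjoint (disjoint_filter.2 hqr)]
  · omega
  · exact disjoint_union_right.2 ⟨disjoint_filter.2 hpq, disjoint_filter.2 hpr⟩

noncomputable def pentLatticePoints (a₁ a₂ a₃ a₄ a₅ : ℤ) : Finset (ℤ × ℤ) :=
  (Icc (a₁ - a₂) (a₁ + a₂) ×ˢ Icc (a₄ - a₅) (a₄ + a₅)).filter
    fun p => ¬(a₃ < p.1 - p.2 ∨ a₃ < p.2 - p.1 ∨ p.1 + p.2 < a₃)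

theorem setOf_intCast_mem_pent (a₁ a₂ a₃ a₄ a₅ : ℤ) :
    {p : ℤ × ℤ | ((p.1 : ℝ), (p.2 : ℝ)) ∈ Pent (a₁ : ℝ) a₂ a₃ a₄ a₅} =
      ↑(pentLatticePoints a₁ a₂ a₃ a₄ a₅) := by
  ext ⟨x, y⟩
  simp only [Pent, pentLatticePoints, abs_le, Set.mem_ofPred_eq, coe_filter, mem_product, mem_Icc]
  norm_cast
  omega

theorem two_mul_card_pentLatticePoints (a₁ a₂ a₃ a₄ a₅ : ℤ)
    (h : NearlyRegular (a₁ : ℝ) a₂ a₃ a₄ a₅) (h12 : a₂ < a₁) (h45 : a₅ < a₄) :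
    2 * (#(pentLatticePoints a₁ a₂ a₃ a₄ a₅) : ℤ) =
      (a₁ + a₂ + a₃ + a₄ + a₅) ^ 2 - 4 * (a₁ ^ 2 + a₂ ^ 2 + a₃ ^ 2 + a₄ ^ 2 + a₅ ^ 2)
        + (a₁ + a₂ + a₃ + a₄ + a₅) + 2 := by
  simp only [NearlyRegular] at h
  norm_cast at h
  obtain ⟨-, -, h3, -, -, h6, h7, h8, h9, h10, h11, -, h13, h14, h15⟩ := h
  have hsplit := card_eq_card_filter_not_or_add
    (Icc (a₁ - a₂) (a₁ + a₂) ×ˢ Icc (a₄ - a₅) (a₄ + a₅))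
    (fun p => a₃ < p.1 - p.2) (fun p => a₃ < p.2 - p.1) (fun p => p.1 + p.2 < a₃)
    (fun p _ => by omega) (fun p hp => by simp only [mem_product, mem_Icc] at hp; omega)
    (fun p hp => by simp only [mem_product, mem_Icc] at hp; omega)
  rw [card_product, Int.card_Icc, Int.card_Icc] at hsplit
  have hT₁ := two_mul_card_Icc_prod_filter_lt_fst_sub (a₁ - a₂) (a₁ + a₂) (a₄ - a₅) (a₄ + a₅) a₃
    (by omega) (by omega) (by omega)
  have hT₂ := two_mul_card_Icc_prod_filter_lt_snd_sub (a₁ - a₂) (a₁ + a₂) (a₄ - a₅) (a₄ + a₅) a₃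
    (by omega) (by omega) (by omega)
  have hT₃ := two_mul_card_Icc_prod_filter_add_lt (a₁ - a₂) (a₁ + a₂) (a₄ - a₅) (a₄ + a₅) a₃
    (by omega) (by omega) (by omega)
  have hwidth : ((a₁ + a₂ + 1 - (a₁ - a₂)).toNat : ℤ) = 2 * a₂ + 1 := by omega
  have hheight : ((a₄ + a₅ + 1 - (a₄ - a₅)).toNat : ℤ) = 2 * a₅ + 1 := by omega
  have hsplitZ := congrArg (Nat.cast : ℕ → ℤ) hsplit
  push_cast [hwidth, hheight] at hsplitZ
  unfold pentLatticePoints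
  linear_combination -2 * hsplitZ - hT₁ - hT₂ - hT₃

theorem stmt_12 (a₁ a₂ a₃ a₄ a₅ : ℤ)
    (h : NearlyRegular (a₁ : ℝ) a₂ a₃ a₄ a₅)
    (h12 : a₂ < a₁) (h45 : a₅ < a₄) :
    ({p : ℤ × ℤ | ((p.1 : ℝ), (p.2 : ℝ)) ∈
        Pent (a₁ : ℝ) a₂ a₃ a₄ a₅}.ncard : ℝ) =
      (1/2) * ((a₁:ℝ) + a₂ + a₃ + a₄ + a₅)^2
        - 2 * ((a₁:ℝ)^2 + a₂^2 + a₃^2 + a₄^2 + a₅^2)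
        + (1/2) * ((a₁:ℝ) + a₂ + a₃ + a₄ + a₅) + 1 := by
  rw [setOf_intCast_mem_pent, Set.ncard_coe_finset]
  have hcount := congrArg (Int.cast : ℤ → ℝ) (two_mul_card_pentLatticePoints _ _ _ _ _ h h12 h45)
  push_cast at hcount
  linear_combination hcount / 2
end

section
/- Let a₁,...,a₅ be positive reals with a₁ > a₂, a₄ > a₅, forming a nearly regular tuple. Then the polytope P = {(x,y) ∈ ℝ² : a₁−a₂ ≤ x ≤ a₁+a₂, a₄−a₅ ≤ y ≤ a₄+a₅, |x−y| ≤ a₃ ≤ x+y} has exactly 7 vertices. -/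
lemma mem_pent {a₁ a₂ a₃ a₄ a₅ : ℝ} {p : ℝ × ℝ} : p ∈ Pent a₁ a₂ a₃ a₄ a₅ ↔
    (a₁ - a₂ ≤ p.1 ∧ p.1 ≤ a₁ + a₂ ∧ a₄ - a₅ ≤ p.2 ∧ p.2 ≤ a₄ + a₅ ∧
      p.1 - p.2 ≤ a₃ ∧ p.2 - p.1 ≤ a₃ ∧ a₃ ≤ p.1 + p.2) := by
  simp [Pent, abs_sub_le_iff]
  tauto

lemma not_extreme_of_pm (s : Set (ℝ × ℝ)) (p d : ℝ × ℝ) (hd : d ≠ 0)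
    (h₁ : p + d ∈ s) (h₂ : p - d ∈ s) : p ∉ s.extremePoints ℝ := by
  intro hp
  rw [mem_extremePoints] at hp
  have hseg : p ∈ openSegment ℝ (p - d) (p + d) := by
    rw [openSegment]
    refine ⟨1/2, 1/2, by norm_num, by norm_num, by norm_num, by module⟩
  have := hp.2 (p - d) h₂ (p + d) h₁ hseg
  apply hd
  have h := this.1
  have h0 : p - d - p = 0 := by rw [h]; abel
  simpa using congrArg Neg.neg h0

lemma not_extreme' (a₁ a₂ a₃ a₄ a₅ x y dx dy : ℝ) (hd : dx ≠ 0 ∨ dy ≠ 0)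
    (h₁ : ((x + dx, y + dy) : ℝ × ℝ) ∈ Pent a₁ a₂ a₃ a₄ a₅)
    (h₂ : ((x - dx, y - dy) : ℝ × ℝ) ∈ Pent a₁ a₂ a₃ a₄ a₅) :
    ((x, y) : ℝ × ℝ) ∉ (Pent a₁ a₂ a₃ a₄ a₅).extremePoints ℝ := by
  apply not_extreme_of_pm _ _ (dx, dy)
  · simp only [Ne, Prod.ext_iff, Prod.fst_zero, Prod.snd_zero, not_and_or]
    exact hd
  · exact h₁
  · exact h₂

lemma extreme_of_unique_max (s : Set (ℝ × ℝ)) (c₁ c₂ : ℝ) (p : ℝ × ℝ) (hp : p ∈ s)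
    (hmax : ∀ q ∈ s, c₁ * q.1 + c₂ * q.2 ≤ c₁ * p.1 + c₂ * p.2)
    (huniq : ∀ q ∈ s, c₁ * q.1 + c₂ * q.2 = c₁ * p.1 + c₂ * p.2 → q = p) :
    p ∈ s.extremePoints ℝ := by
  rw [mem_extremePoints]
  refine ⟨hp, ?_⟩
  rintro x hx y hy ⟨a, b, ha, hb, hab, hxy⟩
  have h1 : a * x.1 + b * y.1 = p.1 := by
    have := congrArg Prod.fst hxy; simpa using this
  have h2 : a * x.2 + b * y.2 = p.2 := by
    have := congrArg Prod.snd hxy; simpa using this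
  have hkey : a * (c₁ * x.1 + c₂ * x.2) + b * (c₁ * y.1 + c₂ * y.2)
      = c₁ * p.1 + c₂ * p.2 := by rw [← h1, ← h2]; ring
  have hfx := hmax x hx
  have hfy := hmax y hy
  have t3 : a * (c₁ * p.1 + c₂ * p.2) + b * (c₁ * p.1 + c₂ * p.2) = c₁ * p.1 + c₂ * p.2 := by
    rw [← add_mul, hab, one_mul]
  have hx' : c₁ * x.1 + c₂ * x.2 = c₁ * p.1 + c₂ * p.2 := by
    by_contra hne
    have hlt := lt_of_le_of_ne hfx hne
    have t1 := mul_lt_mul_of_pos_left hlt ha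
    have t2 := mul_le_mul_of_nonneg_left hfy hb.le
    linarith
  have hy' : c₁ * y.1 + c₂ * y.2 = c₁ * p.1 + c₂ * p.2 := by
    by_contra hne
    have hlt := lt_of_le_of_ne hfy hne
    have t1 := mul_lt_mul_of_pos_left hlt hb
    have t2 := mul_le_mul_of_nonneg_left hfx ha.le
    linarith
  exact ⟨huniq x hx hx', huniq y hy hy'⟩

theorem stmt_13 (a₁ a₂ a₃ a₄ a₅ : ℝ)
    (h : NearlyRegular a₁ a₂ a₃ a₄ a₅)
    (h12 : a₂ < a₁) (h45 : a₅ < a₄) :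
    (Set.extremePoints ℝ (Pent a₁ a₂ a₃ a₄ a₅)).ncard = 7 := by
  obtain ⟨ha1, ha2, ha3, ha4, ha5, hA, hB, hC, hD, hE, hF, hG, hH, hI, hJ⟩ := h
  have hV : Set.extremePoints ℝ (Pent a₁ a₂ a₃ a₄ a₅) =
      {((a₁ - a₂, a₃ - (a₁ - a₂)) : ℝ × ℝ), (a₃ - (a₄ - a₅), a₄ - a₅),
       (a₁ - a₂, a₃ + (a₁ - a₂)), ((a₄ + a₅) - a₃, a₄ + a₅), (a₁ + a₂, a₄ + a₅),
       (a₁ + a₂, (a₁ + a₂) - a₃), (a₃ + (a₄ - a₅), a₄ - a₅)} := by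
    ext ⟨x, y⟩
    simp only [Set.mem_insert_iff, Set.mem_singleton_iff, Prod.mk.injEq]
    constructor
    · intro hp
      obtain ⟨hL, hR, hBo, hT, hd1, hd2, hd3⟩ := mem_pent.1 (extremePoints_subset hp)
      dsimp only at hL hR hBo hT hd1 hd2 hd3
      by_cases hxL : x = a₁ - a₂
      · by_cases hy1 : y = a₃ - (a₁ - a₂)
        · exact Or.inl ⟨hxL, hy1⟩
        by_cases hy2 : y = a₃ + (a₁ - a₂)
        · exact Or.inr (Or.inr (Or.inl ⟨hxL, hy2⟩))
        exfalso
        have hy1' : a₃ - (a₁ - a₂) < y := lt_of_le_of_ne (by linarith) (Ne.symm hy1)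
        have hy2' : y < a₃ + (a₁ - a₂) := lt_of_le_of_ne (by linarith) hy2
        set ε := min (a₃ + (a₁ - a₂) - y) (y - (a₃ - (a₁ - a₂))) with hεdef
        have e1 : ε ≤ a₃ + (a₁ - a₂) - y := min_le_left _ _
        have e2 : ε ≤ y - (a₃ - (a₁ - a₂)) := min_le_right _ _
        have hε : 0 < ε := lt_min (by linarith) (by linarith)
        refine absurd hp (not_extreme' a₁ a₂ a₃ a₄ a₅ x y 0 ε (Or.inr (ne_of_gt hε)) ?_ ?_) <;>
          · rw [mem_pent]; dsimp only
            refine ⟨by linarith, by linarith, by linarith, by linarith, by linarith,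
              by linarith, by linarith⟩
      by_cases hxR : x = a₁ + a₂
      · by_cases hy1 : y = a₄ + a₅
        · exact Or.inr (Or.inr (Or.inr (Or.inr (Or.inl ⟨hxR, hy1⟩))))
        by_cases hy2 : y = (a₁ + a₂) - a₃
        · exact Or.inr (Or.inr (Or.inr (Or.inr (Or.inr (Or.inl ⟨hxR, hy2⟩)))))
        exfalso
        have hy1' : y < a₄ + a₅ := lt_of_le_of_ne hT hy1
        have hy2' : (a₁ + a₂) - a₃ < y := lt_of_le_of_ne (by linarith) (Ne.symm hy2)
        set ε := min ((a₄ + a₅) - y) (y - ((a₁ + a₂) - a₃)) with hεdef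
        have e1 : ε ≤ (a₄ + a₅) - y := min_le_left _ _
        have e2 : ε ≤ y - ((a₁ + a₂) - a₃) := min_le_right _ _
        have hε : 0 < ε := lt_min (by linarith) (by linarith)
        refine absurd hp (not_extreme' a₁ a₂ a₃ a₄ a₅ x y 0 ε (Or.inr (ne_of_gt hε)) ?_ ?_) <;>
          · rw [mem_pent]; dsimp only
            refine ⟨by linarith, by linarith, by linarith, by linarith, by linarith,
              by linarith, by linarith⟩
      by_cases hyB : y = a₄ - a₅
      · by_cases hx1 : x = a₃ - (a₄ - a₅)
        · exact Or.inr (Or.inl ⟨hx1, hyB⟩)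
        by_cases hx2 : x = a₃ + (a₄ - a₅)
        · exact Or.inr (Or.inr (Or.inr (Or.inr (Or.inr (Or.inr ⟨hx2, hyB⟩)))))
        exfalso
        have hx1' : a₃ - (a₄ - a₅) < x := lt_of_le_of_ne (by linarith) (Ne.symm hx1)
        have hx2' : x < a₃ + (a₄ - a₅) := lt_of_le_of_ne (by linarith) hx2
        set ε := min (x - (a₃ - (a₄ - a₅))) ((a₃ + (a₄ - a₅)) - x) with hεdef
        have e1 : ε ≤ x - (a₃ - (a₄ - a₅)) := min_le_left _ _
        have e2 : ε ≤ (a₃ + (a₄ - a₅)) - x := min_le_right _ _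
        have hε : 0 < ε := lt_min (by linarith) (by linarith)
        refine absurd hp (not_extreme' a₁ a₂ a₃ a₄ a₅ x y ε 0 (Or.inl (ne_of_gt hε)) ?_ ?_) <;>
          · rw [mem_pent]; dsimp only
            refine ⟨by linarith, by linarith, by linarith, by linarith, by linarith,
              by linarith, by linarith⟩
      by_cases hyT : y = a₄ + a₅
      · by_cases hx1 : x = (a₄ + a₅) - a₃
        · exact Or.inr (Or.inr (Or.inr (Or.inl ⟨hx1, hyT⟩)))
        exfalso
        have hx1' : (a₄ + a₅) - a₃ < x := lt_of_le_of_ne (by linarith) (Ne.symm hx1)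
        have hx2' : x < a₁ + a₂ := lt_of_le_of_ne hR hxR
        set ε := min (x - ((a₄ + a₅) - a₃)) ((a₁ + a₂) - x) with hεdef
        have e1 : ε ≤ x - ((a₄ + a₅) - a₃) := min_le_left _ _
        have e2 : ε ≤ (a₁ + a₂) - x := min_le_right _ _
        have hε : 0 < ε := lt_min (by linarith) (by linarith)
        refine absurd hp (not_extreme' a₁ a₂ a₃ a₄ a₅ x y ε 0 (Or.inl (ne_of_gt hε)) ?_ ?_) <;>
          · rw [mem_pent]; dsimp only
            refine ⟨by linarith, by linarith, by linarith, by linarith, by linarith,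
              by linarith, by linarith⟩
      exfalso
      have hxL' : a₁ - a₂ < x := lt_of_le_of_ne hL (Ne.symm hxL)
      have hxR' : x < a₁ + a₂ := lt_of_le_of_ne hR hxR
      have hyB' : a₄ - a₅ < y := lt_of_le_of_ne hBo (Ne.symm hyB)
      have hyT' : y < a₄ + a₅ := lt_of_le_of_ne hT hyT
      by_cases h5 : x - y = a₃
      · set ε := min (min ((a₁ + a₂) - x) (x - (a₁ - a₂)))
            (min ((a₄ + a₅) - y) (y - (a₄ - a₅))) with hεdef
        have e1 : ε ≤ (a₁ + a₂) - x := le_trans (min_le_left _ _) (min_le_left _ _)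
        have e2 : ε ≤ x - (a₁ - a₂) := le_trans (min_le_left _ _) (min_le_right _ _)
        have e3 : ε ≤ (a₄ + a₅) - y := le_trans (min_le_right _ _) (min_le_left _ _)
        have e4 : ε ≤ y - (a₄ - a₅) := le_trans (min_le_right _ _) (min_le_right _ _)
        have hε : 0 < ε := lt_min (lt_min (by linarith) (by linarith))
          (lt_min (by linarith) (by linarith))
        refine absurd hp (not_extreme' a₁ a₂ a₃ a₄ a₅ x y ε ε (Or.inl (ne_of_gt hε)) ?_ ?_) <;>
          · rw [mem_pent]; dsimp only
            refine ⟨by linarith, by linarith, by linarith, by linarith, by linarith,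
              by linarith, by linarith⟩
      by_cases h6 : y - x = a₃
      · set ε := min (min ((a₁ + a₂) - x) (x - (a₁ - a₂)))
            (min ((a₄ + a₅) - y) (y - (a₄ - a₅))) with hεdef
        have e1 : ε ≤ (a₁ + a₂) - x := le_trans (min_le_left _ _) (min_le_left _ _)
        have e2 : ε ≤ x - (a₁ - a₂) := le_trans (min_le_left _ _) (min_le_right _ _)
        have e3 : ε ≤ (a₄ + a₅) - y := le_trans (min_le_right _ _) (min_le_left _ _)
        have e4 : ε ≤ y - (a₄ - a₅) := le_trans (min_le_right _ _) (min_le_right _ _)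
        have hε : 0 < ε := lt_min (lt_min (by linarith) (by linarith))
          (lt_min (by linarith) (by linarith))
        refine absurd hp (not_extreme' a₁ a₂ a₃ a₄ a₅ x y ε ε (Or.inl (ne_of_gt hε)) ?_ ?_) <;>
          · rw [mem_pent]; dsimp only
            refine ⟨by linarith, by linarith, by linarith, by linarith, by linarith,
              by linarith, by linarith⟩
      have h5' : x - y < a₃ := lt_of_le_of_ne hd1 h5
      have h6' : y - x < a₃ := lt_of_le_of_ne hd2 h6
      by_cases h7 : a₃ = x + y
      · set ε := min (min ((a₁ + a₂) - x) (x - (a₁ - a₂)))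
            (min (min ((a₄ + a₅) - y) (y - (a₄ - a₅)))
              (min ((a₃ - (x - y)) / 2) ((a₃ - (y - x)) / 2))) with hεdef
        have e1 : ε ≤ (a₁ + a₂) - x := le_trans (min_le_left _ _) (min_le_left _ _)
        have e2 : ε ≤ x - (a₁ - a₂) := le_trans (min_le_left _ _) (min_le_right _ _)
        have e3 : ε ≤ (a₄ + a₅) - y :=
          le_trans (min_le_right _ _) (le_trans (min_le_left _ _) (min_le_left _ _))
        have e4 : ε ≤ y - (a₄ - a₅) :=
          le_trans (min_le_right _ _) (le_trans (min_le_left _ _) (min_le_right _ _))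
        have e5 : ε ≤ (a₃ - (x - y)) / 2 :=
          le_trans (min_le_right _ _) (le_trans (min_le_right _ _) (min_le_left _ _))
        have e6 : ε ≤ (a₃ - (y - x)) / 2 :=
          le_trans (min_le_right _ _) (le_trans (min_le_right _ _) (min_le_right _ _))
        have hε : 0 < ε := lt_min (lt_min (by linarith) (by linarith))
          (lt_min (lt_min (by linarith) (by linarith)) (lt_min (by linarith) (by linarith)))
        refine absurd hp
          (not_extreme' a₁ a₂ a₃ a₄ a₅ x y ε (-ε) (Or.inl (ne_of_gt hε)) ?_ ?_) <;>
          · rw [mem_pent]; dsimp only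
            refine ⟨by linarith, by linarith, by linarith, by linarith, by linarith,
              by linarith, by linarith⟩
      have h7' : a₃ < x + y := lt_of_le_of_ne hd3 h7
      set ε := min (min ((a₁ + a₂) - x) (x - (a₁ - a₂)))
          (min (min (a₃ - (x - y)) (a₃ - (y - x))) ((x + y) - a₃)) with hεdef
      have e1 : ε ≤ (a₁ + a₂) - x := le_trans (min_le_left _ _) (min_le_left _ _)
      have e2 : ε ≤ x - (a₁ - a₂) := le_trans (min_le_left _ _) (min_le_right _ _)
      have e3 : ε ≤ a₃ - (x - y) :=
        le_trans (min_le_right _ _) (le_trans (min_le_left _ _) (min_le_left _ _))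
      have e4 : ε ≤ a₃ - (y - x) :=
        le_trans (min_le_right _ _) (le_trans (min_le_left _ _) (min_le_right _ _))
      have e5 : ε ≤ (x + y) - a₃ := le_trans (min_le_right _ _) (min_le_right _ _)
      have hε : 0 < ε := lt_min (lt_min (by linarith) (by linarith))
        (lt_min (lt_min (by linarith) (by linarith)) (by linarith))
      refine absurd hp (not_extreme' a₁ a₂ a₃ a₄ a₅ x y ε 0 (Or.inl (ne_of_gt hε)) ?_ ?_) <;>
        · rw [mem_pent]; dsimp only
          refine ⟨by linarith, by linarith, by linarith, by linarith, by linarith,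
            by linarith, by linarith⟩
    · intro hv
      rcases hv with ⟨hx, hy⟩ | ⟨hx, hy⟩ | ⟨hx, hy⟩ | ⟨hx, hy⟩ | ⟨hx, hy⟩ | ⟨hx, hy⟩ |
        ⟨hx, hy⟩ <;> subst hx <;> subst hy
      · apply extreme_of_unique_max _ (-2) (-1)
        · rw [mem_pent]; dsimp only
          refine ⟨by linarith, by linarith, by linarith, by linarith, by linarith,
            by linarith, by linarith⟩
        · intro q hq
          obtain ⟨q1, q2, q3, q4, q5, q6, q7⟩ := mem_pent.1 hq
          dsimp only; linarith
        · intro q hq heq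
          obtain ⟨q1, q2, q3, q4, q5, q6, q7⟩ := mem_pent.1 hq
          dsimp only at heq
          have hq1 : q.1 = a₁ - a₂ := by linarith
          have hq2 : q.2 = a₃ - (a₁ - a₂) := by linarith
          exact Prod.ext_iff.2 ⟨hq1, hq2⟩
      · apply extreme_of_unique_max _ (-1) (-2)
        · rw [mem_pent]; dsimp only
          refine ⟨by linarith, by linarith, by linarith, by linarith, by linarith,
            by linarith, by linarith⟩
        · intro q hq
          obtain ⟨q1, q2, q3, q4, q5, q6, q7⟩ := mem_pent.1 hq
          dsimp only; linarith
        · intro q hq heq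
          obtain ⟨q1, q2, q3, q4, q5, q6, q7⟩ := mem_pent.1 hq
          dsimp only at heq
          have hq1 : q.1 = a₃ - (a₄ - a₅) := by linarith
          have hq2 : q.2 = a₄ - a₅ := by linarith
          exact Prod.ext_iff.2 ⟨hq1, hq2⟩
      · apply extreme_of_unique_max _ (-2) 1
        · rw [mem_pent]; dsimp only
          refine ⟨by linarith, by linarith, by linarith, by linarith, by linarith,
            by linarith, by linarith⟩
        · intro q hq
          obtain ⟨q1, q2, q3, q4, q5, q6, q7⟩ := mem_pent.1 hq
          dsimp only; linarith
        · intro q hq heq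
          obtain ⟨q1, q2, q3, q4, q5, q6, q7⟩ := mem_pent.1 hq
          dsimp only at heq
          have hq1 : q.1 = a₁ - a₂ := by linarith
          have hq2 : q.2 = a₃ + (a₁ - a₂) := by linarith
          exact Prod.ext_iff.2 ⟨hq1, hq2⟩
      · apply extreme_of_unique_max _ (-1) 2
        · rw [mem_pent]; dsimp only
          refine ⟨by linarith, by linarith, by linarith, by linarith, by linarith,
            by linarith, by linarith⟩
        · intro q hq
          obtain ⟨q1, q2, q3, q4, q5, q6, q7⟩ := mem_pent.1 hq
          dsimp only; linarith
        · intro q hq heq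
          obtain ⟨q1, q2, q3, q4, q5, q6, q7⟩ := mem_pent.1 hq
          dsimp only at heq
          have hq1 : q.1 = (a₄ + a₅) - a₃ := by linarith
          have hq2 : q.2 = a₄ + a₅ := by linarith
          exact Prod.ext_iff.2 ⟨hq1, hq2⟩
      · apply extreme_of_unique_max _ 1 1
        · rw [mem_pent]; dsimp only
          refine ⟨by linarith, by linarith, by linarith, by linarith, by linarith,
            by linarith, by linarith⟩
        · intro q hq
          obtain ⟨q1, q2, q3, q4, q5, q6, q7⟩ := mem_pent.1 hq
          dsimp only; linarith
        · intro q hq heq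
          obtain ⟨q1, q2, q3, q4, q5, q6, q7⟩ := mem_pent.1 hq
          dsimp only at heq
          have hq1 : q.1 = a₁ + a₂ := by linarith
          have hq2 : q.2 = a₄ + a₅ := by linarith
          exact Prod.ext_iff.2 ⟨hq1, hq2⟩
      · apply extreme_of_unique_max _ 2 (-1)
        · rw [mem_pent]; dsimp only
          refine ⟨by linarith, by linarith, by linarith, by linarith, by linarith,
            by linarith, by linarith⟩
        · intro q hq
          obtain ⟨q1, q2, q3, q4, q5, q6, q7⟩ := mem_pent.1 hq
          dsimp only; linarith
        · intro q hq heq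
          obtain ⟨q1, q2, q3, q4, q5, q6, q7⟩ := mem_pent.1 hq
          dsimp only at heq
          have hq1 : q.1 = a₁ + a₂ := by linarith
          have hq2 : q.2 = (a₁ + a₂) - a₃ := by linarith
          exact Prod.ext_iff.2 ⟨hq1, hq2⟩
      · apply extreme_of_unique_max _ 1 (-2)
        · rw [mem_pent]; dsimp only
          refine ⟨by linarith, by linarith, by linarith, by linarith, by linarith,
            by linarith, by linarith⟩
        · intro q hq
          obtain ⟨q1, q2, q3, q4, q5, q6, q7⟩ := mem_pent.1 hq
          dsimp only; linarith
        · intro q hq heq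
          obtain ⟨q1, q2, q3, q4, q5, q6, q7⟩ := mem_pent.1 hq
          dsimp only at heq
          have hq1 : q.1 = a₃ + (a₄ - a₅) := by linarith
          have hq2 : q.2 = a₄ - a₅ := by linarith
          exact Prod.ext_iff.2 ⟨hq1, hq2⟩
  rw [hV]
  have n1 : (((a₁ - a₂, a₃ - (a₁ - a₂)) : ℝ × ℝ)) ∉
      ({((a₃ - (a₄ - a₅), a₄ - a₅) : ℝ × ℝ), (a₁ - a₂, a₃ + (a₁ - a₂)),
        ((a₄ + a₅) - a₃, a₄ + a₅), (a₁ + a₂, a₄ + a₅), (a₁ + a₂, (a₁ + a₂) - a₃),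
        (a₃ + (a₄ - a₅), a₄ - a₅)} : Set (ℝ × ℝ)) := by
    simp only [Set.mem_insert_iff, Set.mem_singleton_iff, Prod.mk.injEq, not_or]
    refine ⟨?_, ?_, ?_, ?_, ?_, ?_⟩ <;> rintro ⟨e1, e2⟩ <;> linarith
  have n2 : (((a₃ - (a₄ - a₅), a₄ - a₅) : ℝ × ℝ)) ∉
      ({((a₁ - a₂, a₃ + (a₁ - a₂)) : ℝ × ℝ), ((a₄ + a₅) - a₃, a₄ + a₅), (a₁ + a₂, a₄ + a₅),
        (a₁ + a₂, (a₁ + a₂) - a₃), (a₃ + (a₄ - a₅), a₄ - a₅)} : Set (ℝ × ℝ)) := by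
    simp only [Set.mem_insert_iff, Set.mem_singleton_iff, Prod.mk.injEq, not_or]
    refine ⟨?_, ?_, ?_, ?_, ?_⟩ <;> rintro ⟨e1, e2⟩ <;> linarith
  have n3 : (((a₁ - a₂, a₃ + (a₁ - a₂)) : ℝ × ℝ)) ∉
      ({(((a₄ + a₅) - a₃, a₄ + a₅) : ℝ × ℝ), (a₁ + a₂, a₄ + a₅),
        (a₁ + a₂, (a₁ + a₂) - a₃), (a₃ + (a₄ - a₅), a₄ - a₅)} : Set (ℝ × ℝ)) := by
    simp only [Set.mem_insert_iff, Set.mem_singleton_iff, Prod.mk.injEq, not_or]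
    refine ⟨?_, ?_, ?_, ?_⟩ <;> rintro ⟨e1, e2⟩ <;> linarith
  have n4 : ((((a₄ + a₅) - a₃, a₄ + a₅) : ℝ × ℝ)) ∉
      ({((a₁ + a₂, a₄ + a₅) : ℝ × ℝ), (a₁ + a₂, (a₁ + a₂) - a₃),
        (a₃ + (a₄ - a₅), a₄ - a₅)} : Set (ℝ × ℝ)) := by
    simp only [Set.mem_insert_iff, Set.mem_singleton_iff, Prod.mk.injEq, not_or]
    refine ⟨?_, ?_, ?_⟩ <;> rintro ⟨e1, e2⟩ <;> linarith
  have n5 : (((a₁ + a₂, a₄ + a₅) : ℝ × ℝ)) ∉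
      ({((a₁ + a₂, (a₁ + a₂) - a₃) : ℝ × ℝ), (a₃ + (a₄ - a₅), a₄ - a₅)} : Set (ℝ × ℝ)) := by
    simp only [Set.mem_insert_iff, Set.mem_singleton_iff, Prod.mk.injEq, not_or]
    refine ⟨?_, ?_⟩ <;> rintro ⟨e1, e2⟩ <;> linarith
  have n6 : (((a₁ + a₂, (a₁ + a₂) - a₃) : ℝ × ℝ)) ∉
      ({((a₃ + (a₄ - a₅), a₄ - a₅) : ℝ × ℝ)} : Set (ℝ × ℝ)) := by
    simp only [Set.mem_singleton_iff, Prod.mk.injEq, not_and]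
    intro e1; linarith
  rw [Set.ncard_insert_of_notMem n1 (Set.toFinite _),
    Set.ncard_insert_of_notMem n2 (Set.toFinite _),
    Set.ncard_insert_of_notMem n3 (Set.toFinite _),
    Set.ncard_insert_of_notMem n4 (Set.toFinite _),
    Set.ncard_insert_of_notMem n5 (Set.toFinite _),
    Set.ncard_insert_of_notMem n6 (Set.toFinite _),
    Set.ncard_singleton]
end

section
/- Define V(a₁,...,a₅) = ½(Σaᵢ)² − 2(Σaᵢ²). If (a₁,...,a₅) is a nearly regular tuple of positive reals, then V(a₁,...,a₅) > 0. -/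
noncomputable def V (a₁ a₂ a₃ a₄ a₅ : ℝ) : ℝ :=
  (1/2) * (a₁ + a₂ + a₃ + a₄ + a₅)^2 - 2 * (a₁^2 + a₂^2 + a₃^2 + a₄^2 + a₅^2)

set_option maxHeartbeats 1000000 in
theorem stmt_18 (a₁ a₂ a₃ a₄ a₅ : ℝ) (h : NearlyRegular a₁ a₂ a₃ a₄ a₅) :
    0 < V a₁ a₂ a₃ a₄ a₅ := by
  obtain ⟨p1, p2, p3, p4, p5, h12, h13, h14, h15, h23, h24, h25, h34, h35, h45⟩ := h
  unfold V
  nlinarith [mul_pos p1 (sub_pos.2 h45), mul_pos p2 (sub_pos.2 h35),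
    mul_pos p3 (sub_pos.2 h25), mul_pos p4 (sub_pos.2 h15),
    mul_pos p5 (sub_pos.2 h12), mul_pos p1 (sub_pos.2 h23),
    mul_pos p2 (sub_pos.2 h14), mul_pos p3 (sub_pos.2 h24),
    mul_pos p4 (sub_pos.2 h13), mul_pos p5 (sub_pos.2 h34)]
end
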